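/- arXiv:1811.00896 — 4 statements merged into one kernel-verified Lean document; each statement's English description precedes it below -/
import Mathlib

section
/- Let F_q be the finite field of characteristic p with q elements, q ≥ 9, and let n = p^ℓ·m with ℓ ≥ 1, m even, 1 ≤ m < 2q², gcd(m, p) = 1, and q−1 not dividing m. Then CN_q(n) ≥ q^n · (1/2 + 1/(q+1) − 0.96·m/q²). -/
open Polynomial

/-- `x` is a normal element of `E` over the subfield `K` (of cardinality `q ^ l`, `l ∣ n`):
its conjugates `x, x^(q^l), …, x^(q^(l(n/l-1)))` form a `K`-basis of `E`. -/
def IsNormalElementOver (q l n : ℕ) {E : Type} [Field E] (K : Subfield E) (x : E) : Prop :=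
  ∃ B : Module.Basis (Fin (n / l)) K E, ∀ i : Fin (n / l), B i = x ^ (q ^ l) ^ (i : ℕ)

/-- `x ∈ E = F_{q^n}` is completely normal over `F_q`: for every divisor `l` of `n`,
`x` is normal over the intermediate field with `q ^ l` elements. -/
def IsCompletelyNormal (q n : ℕ) {E : Type} [Field E] (x : E) : Prop :=
  ∀ l : ℕ, l ∣ n → ∀ K : Subfield E, Nat.card K = q ^ l → IsNormalElementOver q l n K x

/-- `x` is a primitive element: it generates the multiplicative group `Eˣ`. -/
def IsPrimitiveElement {E : Type} [Field E] (x : E) : Prop :=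
  ∀ y : E, y ≠ 0 → ∃ k : ℕ, x ^ k = y

/-- `x` is `r`-free: `x = y ^ d` with `d ∣ r` forces `d = 1`. -/
def IsFree {E : Type} [Field E] (r : ℕ) (x : E) : Prop :=
  ∀ d : ℕ, d ∣ r → (∃ y : E, x = y ^ d) → d = 1

/-- `CN_q(n)`: the number of completely normal elements of `E = F_{q^n}` over `F_q`. -/
noncomputable def CN (q n : ℕ) (E : Type) [Field E] : ℕ :=
  Nat.card {x : E // IsCompletelyNormal q n x}

/-- `CN_q^r(n)`: the number of `r`-free completely normal elements of `E = F_{q^n}` over `F_q`. -/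
noncomputable def CNfree (q n r : ℕ) (E : Type) [Field E] : ℕ :=
  Nat.card {x : E // IsFree r x ∧ IsCompletelyNormal q n x}

/-- `PCN_q(n)`: the number of primitive completely normal elements. -/
noncomputable def PCN (q n : ℕ) (E : Type) [Field E] : ℕ :=
  Nat.card {x : E // IsPrimitiveElement x ∧ IsCompletelyNormal q n x}

/-- The polynomial Euler function: `polyPhi f` is the number of units of `K[X] ⧸ (f)`. -/
noncomputable def polyPhi {K : Type} [Field K] (f : K[X]) : ℕ :=
  Nat.card (K[X] ⧸ Ideal.span {f})ˣ

/-- The number of monic divisors of `f` in `K[X]`. -/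
noncomputable def Wpoly {K : Type} [Field K] (f : K[X]) : ℕ :=
  Nat.card {g : K[X] // g.Monic ∧ g ∣ f}

/-- The squarefree part of the positive integer `N`: the product of its distinct prime factors. -/
def natSqfreePart (N : ℕ) : ℕ := ∏ p ∈ N.primeFactors, p

/-- `IsSqfreePartOf F f`: `F` is the (monic) squarefree part of `f` in `K[X]`. -/
def IsSqfreePartOf {K : Type} [Field K] (F f : K[X]) : Prop :=
  F.Monic ∧ Squarefree F ∧ F ∣ f ∧ ∀ g : K[X], Irreducible g → g ∣ f → g ∣ F

/-!
For `l ∣ n`, an element `x` is normal over `F_{q^l}` exactly when its annihilator in `F_{q^l}[X]`,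
with `X` acting as the `q^l`-Frobenius `φ`, is `X^(n/l) - 1`, i.e. when no `(X^(n/l) - 1)/g` with
`g` irreducible kills `x`. For `f ∣ X^N - 1` the kernel of `f(φ)` has exactly `Q^(deg f)` elements:
`f(φ)` is an additive polynomial of degree `Q^(deg f)`, and rank–nullity gives the reverse bound.

Over `F_q` we have `X^n - 1 = ∏ g^(p^ℓ)`, `g` running over the irreducible factors of `X^m - 1`,
and the Chinese remainder theorem counts the normal elements exactly:
`∏ (q^(p^ℓ deg g) - q^((p^ℓ - 1) deg g)) ≥ q^n (1 - 1/q)^c (1 - m/(2q²))`, where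
`c = gcd(m, q - 1) ≤ (q - 1)/2` is the number of linear factors, and `(1 - 1/q)^c ≥ e^(-1/2) > 3/5`.
Over `F_{q^l}`, `l ≥ 2`, a union bound over the factors leaves at most `m' q^(n-l)` non-normal
elements, `m'` the `p`-free part of `n/l`: this is `m/2` for `l = 2` (as `m` is even) and at most
`m` otherwise, so these levels cost at most `(1/2 + 1/(q-1)) m q^(n-2)`. In total
`CN_q(n) ≥ q^n (3/5 - (37/40) m/q²)`.
-/

section PolynomialLemmas

variable {R : Type*} [CommRing R]

lemma monic_X_pow_sub_one {N : ℕ} (hN : N ≠ 0) : (X ^ N - 1 : R[X]).Monic := by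
  simpa using monic_X_pow_sub_C (1 : R) hN

lemma natDegree_X_pow_sub_one [Nontrivial R] (N : ℕ) : (X ^ N - 1 : R[X]).natDegree = N := by
  simpa using natDegree_X_pow_sub_C (n := N) (r := (1 : R))

lemma mul_divByMonic_eq_of_dvd {f g : R[X]} (hg : g.Monic) (hgf : g ∣ f) : g * (f /ₘ g) = f := by
  obtain ⟨h, rfl⟩ := hgf
  rw [mul_divByMonic_cancel_left h hg]

end PolynomialLemmas

section PolyOrder

variable {K V : Type*} [Field K] [AddCommGroup V] [Module K V] (σ : Module.End K V)

/-- `F` generates the annihilator of `x` in `K[X]`, where `X` acts on `V` as `σ`. -/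
def IsPolyOrder (F : K[X]) (x : V) : Prop :=
  ∀ P : K[X], aeval σ P x = 0 ↔ F ∣ P

variable {σ}

lemma aeval_apply_eq_zero_of_dvd {P R : K[X]} {x : V} (hPR : P ∣ R) (hP : aeval σ P x = 0) :
    aeval σ R x = 0 := by
  obtain ⟨c, rfl⟩ := hPR
  rw [mul_comm, map_mul, Module.End.mul_apply, hP, map_zero]

lemma aeval_comm_apply (P Q : K[X]) (x : V) :
    aeval σ P (aeval σ Q x) = aeval σ Q (aeval σ P x) := by
  rw [← Module.End.mul_apply, ← map_mul, mul_comm, map_mul, Module.End.mul_apply]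

lemma IsPolyOrder.aeval_eq_zero {F : K[X]} {x : V} (h : IsPolyOrder σ F x) : aeval σ F x = 0 :=
  (h F).2 dvd_rfl

lemma isPolyOrder_one_iff {x : V} : IsPolyOrder σ 1 x ↔ x = 0 := by
  refine ⟨fun h => by simpa using h.aeval_eq_zero, ?_⟩
  rintro rfl P
  simp

lemma isPolyOrder_of_forall_irreducible {F : K[X]} {x : V} (hF : F ≠ 0) (hFx : aeval σ F x = 0)
    (hmax : ∀ g h : K[X], Irreducible g → g * h = F → aeval σ h x ≠ 0) : IsPolyOrder σ F x := by
  classical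
  intro P
  refine ⟨fun hP => ?_, fun hFP => aeval_apply_eq_zero_of_dvd hFP hFx⟩
  have hd : aeval σ (EuclideanDomain.gcd F P) x = 0 := by
    rw [EuclideanDomain.gcd_eq_gcd_ab, map_add, LinearMap.add_apply,
      aeval_apply_eq_zero_of_dvd (dvd_mul_right F _) hFx,
      aeval_apply_eq_zero_of_dvd (dvd_mul_right P _) hP, add_zero]
  obtain ⟨c, hc⟩ := EuclideanDomain.gcd_dvd_left F P
  by_cases hcu : IsUnit c
  · exact (Associated.symm ⟨hcu.unit, hc.symm⟩).dvd.trans (EuclideanDomain.gcd_dvd_right F P)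
  obtain ⟨g, hg, c', rfl⟩ := WfDvdMonoid.exists_irreducible_factor hcu
    (right_ne_zero_of_mul (hc ▸ hF))
  exact absurd (aeval_apply_eq_zero_of_dvd (dvd_mul_right _ c') hd)
    (hmax g (_ * c') hg (by rw [mul_left_comm]; exact hc.symm))

lemma exists_aeval_divByMonic_eq_zero_of_not_isPolyOrder [DecidableEq K] {F : K[X]} {x : V}
    (hF : F ≠ 0) (hFx : aeval σ F x = 0) (hx : ¬ IsPolyOrder σ F x) :
    ∃ g ∈ UniqueFactorizationMonoid.normalizedFactors F, aeval σ (F /ₘ g) x = 0 := by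
  by_contra! hgood
  refine hx (isPolyOrder_of_forall_irreducible hF hFx fun g' h hg' hg'h hh => ?_)
  obtain ⟨g, hg, hg'g⟩ :=
    UniqueFactorizationMonoid.exists_mem_normalizedFactors_of_dvd hF hg' (Dvd.intro h hg'h)
  have hgF := mul_divByMonic_eq_of_dvd ((Polynomial.mem_normalizedFactors_iff hF).mp hg).2.1
    (UniqueFactorizationMonoid.dvd_of_mem_normalizedFactors hg)
  have hh' : Associated h (F /ₘ g) :=
    Associated.of_mul_left (by rw [hg'h, hgF]; exact Associated.refl F) hg'g hg'.ne_zero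
  exact hgood g hg (aeval_apply_eq_zero_of_dvd hh'.dvd hh)

lemma isPolyOrder_pow_iff {g : K[X]} (hg : Irreducible g) {a : ℕ} (ha : a ≠ 0) {x : V} :
    IsPolyOrder σ (g ^ a) x ↔ aeval σ (g ^ a) x = 0 ∧ aeval σ (g ^ (a - 1)) x ≠ 0 := by
  have hga : g * g ^ (a - 1) = g ^ a := by rw [← pow_succ', Nat.sub_add_cancel (by omega)]
  refine ⟨fun h => ⟨h.aeval_eq_zero, fun h0 => ?_⟩, fun ⟨h0, h1⟩ => ?_⟩
  · have := (pow_dvd_pow_iff hg.ne_zero hg.not_isUnit).mp ((h _).1 h0)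
    omega
  refine isPolyOrder_of_forall_irreducible (pow_ne_zero a hg.ne_zero) h0
    fun g' f hg' hg'f hf => h1 (aeval_apply_eq_zero_of_dvd ?_ hf)
  have hgg' : g ∣ g' :=
    (hg'.associated_of_dvd hg (hg'.prime.dvd_of_dvd_pow (Dvd.intro f hg'f))).symm.dvd
  rw [← mul_dvd_mul_iff_left hg.ne_zero, hga, ← hg'f]
  exact mul_dvd_mul_right hgg' f

lemma card_isPolyOrder_pow [Finite V] {g : K[X]} (hg : Irreducible g) {a : ℕ} (ha : a ≠ 0) :
    Nat.card {x // IsPolyOrder σ (g ^ a) x} = Nat.card (LinearMap.ker (aeval σ (g ^ a))) -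
      Nat.card (LinearMap.ker (aeval σ (g ^ (a - 1)))) := by
  have hset : {x | IsPolyOrder σ (g ^ a) x} =
      (LinearMap.ker (aeval σ (g ^ a)) : Set V) \ LinearMap.ker (aeval σ (g ^ (a - 1))) := by
    ext x
    simp [isPolyOrder_pow_iff hg ha]
  have hsub : (LinearMap.ker (aeval σ (g ^ (a - 1))) : Set V) ⊆ LinearMap.ker (aeval σ (g ^ a)) :=
    fun x hx => aeval_apply_eq_zero_of_dvd (pow_dvd_pow g (Nat.sub_le a 1)) hx
  rw [← SetLike.coe_sort_coe, ← SetLike.coe_sort_coe, Nat.card_coe_set_eq, Nat.card_coe_set_eq,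
    ← Set.ncard_sdiff hsub, ← hset]
  rfl

lemma IsPolyOrder.linearIndependent {F : K[X]} {x : V} (h : IsPolyOrder σ F x) {N : ℕ}
    (hN : N ≤ F.natDegree) : LinearIndependent K (fun i : Fin N => (σ ^ (i : ℕ)) x) := by
  rw [Fintype.linearIndependent_iff]
  intro c hc
  set P : K[X] := ∑ i : Fin N, C (c i) * X ^ (i : ℕ)
  have hP : aeval σ P x = 0 := by
    simpa only [P, map_sum, map_mul, aeval_C, map_pow, aeval_X, LinearMap.coe_sum,
      Finset.sum_apply, Module.End.mul_apply, Module.algebraMap_end_apply] using hc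
  have hP0 : P = 0 := by
    rcases eq_or_ne F 0 with rfl | hF
    · exact zero_dvd_iff.mp ((h P).1 hP)
    refine eq_zero_of_dvd_of_degree_lt ((h P).1 hP) ((degree_sum_fin_lt c).trans_le ?_)
    rw [degree_eq_natDegree hF]
    exact_mod_cast hN
  intro i
  simpa [P, finsetSum_coeff, coeff_C_mul, coeff_X_pow, Fin.val_inj] using congrArg (coeff · i) hP0

section Coprime

variable {A B : K[X]} {y z : V}

lemma aeval_mul_apply_eq_self {u v : K[X]} (huv : u * A + v * B = 1) (hy : aeval σ A y = 0) :
    aeval σ (v * B) y = y := by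
  have := congrArg (fun P => aeval σ P y) huv
  simpa only [map_add, LinearMap.add_apply, aeval_apply_eq_zero_of_dvd (dvd_mul_left A u) hy,
    zero_add, map_one, Module.End.one_apply] using this

lemma aeval_add_eq_zero_iff (hAB : IsCoprime A B) (hy : aeval σ A y = 0) (hz : aeval σ B z = 0)
    (P : K[X]) : aeval σ P (y + z) = 0 ↔ aeval σ P y = 0 ∧ aeval σ P z = 0 := by
  refine ⟨fun h => ?_, fun ⟨h1, h2⟩ => by rw [map_add, h1, h2, add_zero]⟩
  obtain ⟨u, v, huv⟩ := hAB
  have hvB : aeval σ (v * B) (y + z) = y := by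
    rw [map_add, aeval_mul_apply_eq_self huv hy,
      aeval_apply_eq_zero_of_dvd (dvd_mul_left B v) hz, add_zero]
  have huA : aeval σ (u * A) (y + z) = z := by
    rw [map_add, aeval_mul_apply_eq_self (by rw [← huv, add_comm]) hz,
      aeval_apply_eq_zero_of_dvd (dvd_mul_left A u) hy, zero_add]
  constructor
  · rw [← hvB, aeval_comm_apply, h, map_zero]
  · rw [← huA, aeval_comm_apply, h, map_zero]

lemma IsPolyOrder.of_mul_add (hAB : IsCoprime A B) (hy : aeval σ A y = 0)
    (hz : aeval σ B z = 0) (h : IsPolyOrder σ (A * B) (y + z)) : IsPolyOrder σ A y := by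
  refine fun P => ⟨fun hP => ?_, fun hAP => aeval_apply_eq_zero_of_dvd hAP hy⟩
  rcases eq_or_ne B 0 with rfl | hB
  · exact (isCoprime_zero_right.mp hAB).dvd
  have hPB : A * B ∣ P * B := (h _).1 <| (aeval_add_eq_zero_iff hAB hy hz _).2
    ⟨aeval_apply_eq_zero_of_dvd (dvd_mul_right P B) hP,
      aeval_apply_eq_zero_of_dvd (dvd_mul_left B P) hz⟩
  exact (mul_dvd_mul_iff_right hB).mp hPB

lemma isPolyOrder_mul_add_iff (hAB : IsCoprime A B) (hy : aeval σ A y = 0)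
    (hz : aeval σ B z = 0) :
    IsPolyOrder σ (A * B) (y + z) ↔ IsPolyOrder σ A y ∧ IsPolyOrder σ B z := by
  refine ⟨fun h => ⟨h.of_mul_add hAB hy hz, ?_⟩, fun ⟨hA, hB⟩ P => ?_⟩
  · rw [mul_comm, add_comm] at h
    exact h.of_mul_add hAB.symm hz hy
  rw [aeval_add_eq_zero_iff hAB hy hz, hA, hB]
  exact ⟨fun ⟨hAP, hBP⟩ => hAB.mul_dvd hAP hBP,
    fun hABP => ⟨(dvd_mul_right A B).trans hABP, (dvd_mul_left B A).trans hABP⟩⟩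

/-- With `u * A + v * B = 1`, `x ↦ ((v * B)(σ) x, (u * A)(σ) x)` is the Chinese remainder
splitting of the vectors of order `A * B`. -/
lemma card_isPolyOrder_mul (hAB : IsCoprime A B) :
    Nat.card {x // IsPolyOrder σ (A * B) x} =
      Nat.card {y // IsPolyOrder σ A y} * Nat.card {z // IsPolyOrder σ B z} := by
  obtain ⟨u, v, huv⟩ := id hAB
  have hvu : v * B + u * A = 1 := by rw [← huv, add_comm]
  have hsplit : ∀ x, aeval σ (v * B) x + aeval σ (u * A) x = x := fun x => by
    rw [← LinearMap.add_apply, ← map_add, hvu, map_one, Module.End.one_apply]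
  have hkerA : ∀ x, aeval σ (A * B) x = 0 → aeval σ A (aeval σ (v * B) x) = 0 := fun x hx => by
    rw [← Module.End.mul_apply, ← map_mul]
    exact aeval_apply_eq_zero_of_dvd ⟨v, by ring⟩ hx
  have hkerB : ∀ x, aeval σ (A * B) x = 0 → aeval σ B (aeval σ (u * A) x) = 0 := fun x hx => by
    rw [← Module.End.mul_apply, ← map_mul]
    exact aeval_apply_eq_zero_of_dvd ⟨u, by ring⟩ hx
  have horder : ∀ x, IsPolyOrder σ (A * B) x →
      IsPolyOrder σ A (aeval σ (v * B) x) ∧ IsPolyOrder σ B (aeval σ (u * A) x) := fun x hx => by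
    rw [← isPolyOrder_mul_add_iff hAB (hkerA x hx.aeval_eq_zero) (hkerB x hx.aeval_eq_zero),
      hsplit]
    exact hx
  rw [← Nat.card_prod]
  refine Nat.card_congr
    { toFun := fun x => (⟨_, (horder x x.2).1⟩, ⟨_, (horder x x.2).2⟩)
      invFun := fun yz => ⟨yz.1 + yz.2, (isPolyOrder_mul_add_iff hAB yz.1.2.aeval_eq_zero
        yz.2.2.aeval_eq_zero).2 ⟨yz.1.2, yz.2.2⟩⟩
      left_inv := fun x => Subtype.ext (hsplit x)
      right_inv := fun ⟨⟨y, hy⟩, ⟨z, hz⟩⟩ => ?_ }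
  have hy0 := hy.aeval_eq_zero
  have hz0 := hz.aeval_eq_zero
  ext
  · simp only [map_add, aeval_mul_apply_eq_self huv hy0,
      aeval_apply_eq_zero_of_dvd (dvd_mul_left B v) hz0, add_zero]
  · simp only [map_add, aeval_mul_apply_eq_self hvu hz0,
      aeval_apply_eq_zero_of_dvd (dvd_mul_left A u) hy0, zero_add]

end Coprime

lemma card_isPolyOrder_prod {ι : Type*} (s : Finset ι) (f : ι → K[X])
    (hs : (s : Set ι).Pairwise fun i j => IsCoprime (f i) (f j)) :
    Nat.card {x // IsPolyOrder σ (∏ i ∈ s, f i) x} =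
      ∏ i ∈ s, Nat.card {x // IsPolyOrder σ (f i) x} := by
  classical
  induction s using Finset.induction_on with
  | empty =>
    simp only [Finset.prod_empty, isPolyOrder_one_iff]
    exact Nat.card_unique
  | insert i s hi ih =>
    rw [Finset.coe_insert, Set.pairwise_insert] at hs
    rw [Finset.prod_insert hi, Finset.prod_insert hi, card_isPolyOrder_mul, ih hs.1]
    exact IsCoprime.prod_right fun j hj => (hs.2 j hj (by rintro rfl; exact hi hj)).1

end PolyOrder

section Frobenius

variable {K L : Type*} [Field K] [Fintype K] [Field L] [Algebra K L]

variable (K L) in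
noncomputable def frobEnd : Module.End K L := (FiniteField.frobeniusAlgHom K L).toLinearMap

lemma frobEnd_pow_apply (i : ℕ) (x : L) : (frobEnd K L ^ i) x = x ^ Fintype.card K ^ i := by
  induction i with
  | zero => simp
  | succ i ih => rw [pow_succ', Module.End.mul_apply, ih]; simp [frobEnd, ← pow_mul, pow_succ]

variable [Fintype L]

lemma aeval_frobEnd_X_pow_sub_one {N : ℕ} (hL : Fintype.card L = Fintype.card K ^ N) :
    aeval (frobEnd K L) (X ^ N - 1 : K[X]) = 0 := by
  ext x
  simp [frobEnd_pow_apply, ← hL, FiniteField.pow_card]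

lemma card_ker_aeval_frobEnd_le {f : K[X]} (hf : f.Monic) :
    Nat.card (LinearMap.ker (aeval (frobEnd K L) f)) ≤ Fintype.card K ^ f.natDegree := by
  classical
  -- `aeval (frobEnd K L) f` evaluates the additive polynomial `X ^ #K ^ deg f + R`.
  set R : L[X] := ∑ i ∈ Finset.range f.natDegree,
    C (algebraMap K L (f.coeff i)) * X ^ Fintype.card K ^ i
  have hR : R.degree < (X ^ Fintype.card K ^ f.natDegree : L[X]).degree := by
    rw [degree_X_pow]
    refine (degree_sum_le _ _).trans_lt ((Finset.sup_lt_iff (WithBot.bot_lt_coe _)).mpr ?_)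
    intro i hi
    exact (degree_C_mul_X_pow_le _ _).trans_lt
      (by exact_mod_cast Nat.pow_lt_pow_right Fintype.one_lt_card (Finset.mem_range.mp hi))
  have hmonic : (X ^ Fintype.card K ^ f.natDegree + R).Monic := (monic_X_pow _).add_of_left hR
  have heval : ∀ x, (X ^ Fintype.card K ^ f.natDegree + R).eval x = aeval (frobEnd K L) f x :=
    fun x => by
      rw [aeval_eq_sum_range, Finset.sum_range_succ, hf.coeff_natDegree, one_smul, add_comm,
        eval_add, eval_finsetSum]
      simp [frobEnd_pow_apply, Algebra.smul_def]
  calc Nat.card (LinearMap.ker (aeval (frobEnd K L) f))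
      = (Finset.univ.filter fun x => aeval (frobEnd K L) f x = 0).card := by
        simp [Nat.card_eq_fintype_card, ← Fintype.card_subtype]
    _ ≤ (X ^ Fintype.card K ^ f.natDegree + R).natDegree := by
        refine card_le_degree_of_subset_roots fun x hx => ?_
        rw [mem_roots hmonic.ne_zero, IsRoot, heval]
        simpa using hx
    _ = Fintype.card K ^ f.natDegree := by
        rw [natDegree_add_eq_left_of_degree_lt hR, natDegree_X_pow]

lemma card_ker_aeval_frobEnd {N : ℕ} (hL : Fintype.card L = Fintype.card K ^ N) {f : K[X]}
    (hf : f.Monic) (hfN : f ∣ X ^ N - 1) :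
    Nat.card (LinearMap.ker (aeval (frobEnd K L) f)) = Fintype.card K ^ f.natDegree := by
  have hN : N ≠ 0 := by
    rintro rfl
    exact Fintype.one_lt_card.ne' (by simpa using hL)
  obtain ⟨g, hfg⟩ := hfN
  have hg : g.Monic := hf.of_mul_monic_left (hfg ▸ monic_X_pow_sub_one hN)
  have hdeg : g.natDegree + f.natDegree = N := by
    rw [add_comm, ← natDegree_mul hf.ne_zero hg.ne_zero, ← hfg, natDegree_X_pow_sub_one]
  have hrange :
      LinearMap.range (aeval (frobEnd K L) g) ≤ LinearMap.ker (aeval (frobEnd K L) f) := by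
    rintro _ ⟨y, rfl⟩
    rw [LinearMap.mem_ker, ← Module.End.mul_apply, ← map_mul, ← hfg,
      aeval_frobEnd_X_pow_sub_one hL, LinearMap.zero_apply]
  have hsplit : Fintype.card L = Nat.card (LinearMap.ker (aeval (frobEnd K L) g)) *
      Nat.card (LinearMap.range (aeval (frobEnd K L) g)) := by
    rw [← Nat.card_eq_fintype_card, Submodule.card_eq_card_quotient_mul_card
      (LinearMap.ker (aeval (frobEnd K L) g)),
      Nat.card_congr (LinearMap.quotKerEquivRange _).toEquiv, mul_comm]
  refine le_antisymm (card_ker_aeval_frobEnd_le hf)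
    (Nat.le_of_mul_le_mul_left ?_ (pow_pos (Fintype.card_pos (α := K)) g.natDegree))
  calc Fintype.card K ^ g.natDegree * Fintype.card K ^ f.natDegree = Fintype.card L := by
        rw [hL, ← pow_add, hdeg]
    _ ≤ _ := hsplit.le.trans (Nat.mul_le_mul (card_ker_aeval_frobEnd_le hg)
        (Nat.card_mono (Set.toFinite _) hrange))

lemma card_isPolyOrder_frobEnd_pow {N : ℕ} (hL : Fintype.card L = Fintype.card K ^ N)
    {g : K[X]} (hgm : g.Monic) (hg : Irreducible g) {a : ℕ} (ha : a ≠ 0)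
    (hgN : g ^ a ∣ X ^ N - 1) :
    (Nat.card {x // IsPolyOrder (frobEnd K L) (g ^ a) x} : ℝ) =
      (Fintype.card K : ℝ) ^ (a * g.natDegree) * (1 - (Fintype.card K : ℝ)⁻¹ ^ g.natDegree) := by
  have hle : Fintype.card K ^ ((a - 1) * g.natDegree) ≤ Fintype.card K ^ (a * g.natDegree) :=
    Nat.pow_le_pow_right Fintype.card_pos (Nat.mul_le_mul_right _ (Nat.sub_le a 1))
  have hinv : (Fintype.card K : ℝ) ^ g.natDegree * (Fintype.card K : ℝ)⁻¹ ^ g.natDegree = 1 := by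
    rw [← mul_pow, mul_inv_cancel₀ (by exact_mod_cast Fintype.card_ne_zero), one_pow]
  rw [card_isPolyOrder_pow hg ha, card_ker_aeval_frobEnd hL (hgm.pow a) hgN,
    card_ker_aeval_frobEnd hL (hgm.pow (a - 1)) ((pow_dvd_pow g (Nat.sub_le a 1)).trans hgN),
    natDegree_pow, natDegree_pow, Nat.cast_sub hle]
  obtain ⟨b, rfl⟩ : ∃ b, a = b + 1 := ⟨a - 1, by omega⟩
  rw [Nat.add_sub_cancel, add_one_mul, pow_add]
  push_cast
  linear_combination (Fintype.card K : ℝ) ^ (b * g.natDegree) * hinv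

end Frobenius

section Factorization

open UniqueFactorizationMonoid

variable {K : Type*} [Field K]

section NormalizedFactors

variable [DecidableEq K]

lemma mem_toFinset_normalizedFactors_iff {f g : K[X]} (hf : f ≠ 0) :
    g ∈ (normalizedFactors f).toFinset ↔ Irreducible g ∧ g.Monic ∧ g ∣ f := by
  rw [Multiset.mem_toFinset, Polynomial.mem_normalizedFactors_iff hf]

lemma pairwise_isCoprime_pow_toFinset_normalizedFactors (f : K[X]) (a : ℕ) :
    ((normalizedFactors f).toFinset : Set K[X]).Pairwise
      fun g g' => IsCoprime (g ^ a) (g' ^ a) := by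
  intro g hg g' hg' hne
  have hg := Multiset.mem_toFinset.mp hg
  have hg' := Multiset.mem_toFinset.mp hg'
  refine IsCoprime.pow (((irreducible_of_normalized_factor g hg).coprime_iff_not_dvd).mpr
    fun hdvd => hne ?_)
  rw [← normalize_normalized_factor g hg, ← normalize_normalized_factor g' hg']
  exact normalize_eq_normalize hdvd ((irreducible_of_normalized_factor g hg).associated_of_dvd
    (irreducible_of_normalized_factor g' hg') hdvd).symm.dvd

lemma prod_toFinset_normalizedFactors {f : K[X]} (hf : f.Monic) (hsq : Squarefree f) :
    ∏ g ∈ (normalizedFactors f).toFinset, g = f := by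
  have hnd := (squarefree_iff_nodup_normalizedFactors hf.ne_zero).mp hsq
  rw [Finset.prod_eq_multiset_prod, Multiset.toFinset_val, hnd.dedup, Multiset.map_id']
  simpa [hf.leadingCoeff] using leadingCoeff_mul_prod_normalizedFactors f

lemma sum_natDegree_toFinset_normalizedFactors {f : K[X]} (hf : f.Monic) (hsq : Squarefree f) :
    ∑ g ∈ (normalizedFactors f).toFinset, g.natDegree = f.natDegree := by
  conv_rhs => rw [← prod_toFinset_normalizedFactors hf hsq]
  exact (natDegree_prod _ _ fun g hg =>
    (irreducible_of_normalized_factor g (Multiset.mem_toFinset.mp hg)).ne_zero).symm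

lemma card_toFinset_normalizedFactors_le {f : K[X]} (hf : f.Monic) (hsq : Squarefree f) :
    (normalizedFactors f).toFinset.card ≤ f.natDegree := by
  rw [Finset.card_eq_sum_ones, ← sum_natDegree_toFinset_normalizedFactors hf hsq]
  exact Finset.sum_le_sum fun g hg =>
    (irreducible_of_normalized_factor g (Multiset.mem_toFinset.mp hg)).natDegree_pos

lemma card_filter_natDegree_eq_one_le {f : K[X]} (hf : f ≠ 0) :
    ((normalizedFactors f).toFinset.filter fun g => g.natDegree = 1).card ≤
      f.roots.toFinset.card := by
  have hX : ∀ g ∈ (normalizedFactors f).toFinset.filter fun g => g.natDegree = 1,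
      g = X + C (g.coeff 0) ∧ g ∣ f := fun g hg => by
    obtain ⟨hg, hg1⟩ := Finset.mem_filter.mp hg
    obtain ⟨-, hgm, hgf⟩ := (mem_toFinset_normalizedFactors_iff hf).mp hg
    exact ⟨hgm.eq_X_add_C hg1, hgf⟩
  refine Finset.card_le_card_of_injOn (fun g => -g.coeff 0) (fun g hg => ?_)
    (fun g hg g' hg' h => by rw [(hX g hg).1, (hX g' hg').1, neg_injective h])
  rw [Finset.mem_coe, Multiset.mem_toFinset, mem_roots hf, ← dvd_iff_isRoot, map_neg,
    sub_neg_eq_add, ← (hX g hg).1]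
  exact (hX g hg).2

end NormalizedFactors

lemma two_mul_card_nthRootsFinset_le [Fintype K] {r : ℕ} (hr : ¬ (Fintype.card K - 1) ∣ r) :
    2 * (nthRootsFinset r (1 : K)).card ≤ Fintype.card K - 1 := by
  classical
  have : NeZero r := ⟨by rintro rfl; exact hr (dvd_zero _)⟩
  have hcard : (nthRootsFinset r (1 : K)).card = (Fintype.card K - 1).gcd r := by
    rw [← Fintype.card_units, ← Nat.card_eq_fintype_card, ← IsCyclic.card_powMonoidHom_ker,
      ← rootsOfUnity_eq_ker, Nat.card_congr (rootsOfUnityEquivNthRoots K r), nthRootsFinset_def]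
    simp [Nat.card_eq_fintype_card, ← Fintype.card_coe]
  obtain ⟨c, hc⟩ := Nat.gcd_dvd_left (Fintype.card K - 1) r
  have hc1 : c ≠ 1 := by
    rintro rfl
    exact hr (hc ▸ (mul_one (Nat.gcd _ r)).symm ▸ Nat.gcd_dvd_right _ r)
  have hc0 : c ≠ 0 := by
    rintro rfl
    have := Fintype.one_lt_card (α := K)
    omega
  rw [hcard]
  calc 2 * (Fintype.card K - 1).gcd r ≤ (Fintype.card K - 1).gcd r * c := by
        rw [mul_comm]; exact Nat.mul_le_mul_left _ (by omega)
    _ = _ := hc.symm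

variable {p : ℕ} [CharP K p]

lemma squarefree_X_pow_sub_one {r : ℕ} (hr : ¬ p ∣ r) : Squarefree (X ^ r - 1 : K[X]) := by
  simpa using (separable_X_pow_sub_C' p r (1 : K) hr one_ne_zero).squarefree

variable [Fact p.Prime]

lemma X_pow_sub_one_eq_pow (e r : ℕ) : (X ^ (p ^ e * r) - 1 : K[X]) = (X ^ r - 1) ^ p ^ e := by
  rw [sub_pow_char_pow, one_pow, ← pow_mul, mul_comm]

lemma X_pow_sub_one_eq_prod [DecidableEq K] (e : ℕ) {r : ℕ} (hr : ¬ p ∣ r) :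
    (X ^ (p ^ e * r) - 1 : K[X]) =
      ∏ g ∈ (normalizedFactors (X ^ r - 1 : K[X])).toFinset, g ^ p ^ e := by
  have hr0 : r ≠ 0 := by rintro rfl; exact hr (dvd_zero p)
  rw [Finset.prod_pow, prod_toFinset_normalizedFactors (monic_X_pow_sub_one hr0)
    (squarefree_X_pow_sub_one hr), X_pow_sub_one_eq_pow]

end Factorization

section Estimates

lemma one_sub_sum_div_le_prod_one_sub_inv_pow {ι : Type*} (s : Finset ι) (d : ι → ℕ) {Q : ℝ}
    (hQ : 1 ≤ Q) (hd : ∀ i ∈ s, 2 ≤ d i) :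
    1 - (∑ i ∈ s, d i : ℝ) / (2 * Q ^ 2) ≤ ∏ i ∈ s, (1 - Q⁻¹ ^ d i) := by
  have hQ' : Q⁻¹ ≤ 1 := inv_le_one_of_one_le₀ hQ
  have hQ0 : 0 ≤ Q⁻¹ := inv_nonneg.mpr (by linarith)
  have hcard : (2 * s.card : ℝ) ≤ ∑ i ∈ s, (d i : ℝ) := by
    rw [Finset.card_eq_sum_ones, Nat.cast_sum, Finset.mul_sum]
    exact Finset.sum_le_sum fun i hi => by simpa using (Nat.cast_le (α := ℝ)).mpr (hd i hi)
  calc 1 - (∑ i ∈ s, d i : ℝ) / (2 * Q ^ 2) ≤ 1 + s.card * -Q⁻¹ ^ 2 := by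
        rw [inv_pow, div_eq_mul_inv, mul_inv]
        nlinarith [mul_le_mul_of_nonneg_right hcard (inv_nonneg.mpr (sq_nonneg Q))]
    _ ≤ (1 - Q⁻¹ ^ 2) ^ s.card := by
        rw [sub_eq_add_neg]
        exact one_add_mul_le_pow (by nlinarith [pow_le_one₀ hQ0 hQ' (n := 2)]) _
    _ = ∏ _i ∈ s, (1 - Q⁻¹ ^ 2) := (Finset.prod_const _).symm
    _ ≤ ∏ i ∈ s, (1 - Q⁻¹ ^ d i) := Finset.prod_le_prod
        (fun _ _ => sub_nonneg.mpr (pow_le_one₀ hQ0 hQ')) fun i hi =>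
          sub_le_sub_left (pow_le_pow_of_le_one hQ0 hQ' (hd i hi)) 1

lemma pow_mul_le_prod_one_sub_inv_pow {ι : Type*} (s : Finset ι) (d : ι → ℕ) {Q : ℝ}
    (hQ : 1 ≤ Q) (hd : ∀ i ∈ s, 1 ≤ d i) {c : ℕ} (hc : (s.filter fun i => d i = 1).card ≤ c) :
    (1 - Q⁻¹) ^ c * (1 - (∑ i ∈ s, d i : ℝ) / (2 * Q ^ 2)) ≤ ∏ i ∈ s, (1 - Q⁻¹ ^ d i) := by
  have hQ' : Q⁻¹ ≤ 1 := inv_le_one_of_one_le₀ hQ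
  have hQ0 : 0 ≤ Q⁻¹ := inv_nonneg.mpr (by linarith)
  have h0 : 0 ≤ 1 - Q⁻¹ := sub_nonneg.mpr hQ'
  have hfac : ∀ i ∈ s, 0 ≤ 1 - Q⁻¹ ^ d i := fun i _ => sub_nonneg.mpr (pow_le_one₀ hQ0 hQ')
  rcases lt_or_ge (1 - (∑ i ∈ s, d i : ℝ) / (2 * Q ^ 2)) 0 with hneg | hY
  · exact (mul_nonpos_of_nonneg_of_nonpos (pow_nonneg h0 c) hneg.le).trans
      (Finset.prod_nonneg hfac)
  rw [← Finset.prod_filter_mul_prod_filter_not s (fun i => d i = 1)]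
  have h₁ : (1 - Q⁻¹) ^ c ≤ ∏ i ∈ s.filter (fun i => d i = 1), (1 - Q⁻¹ ^ d i) := by
    rw [Finset.prod_congr rfl fun i hi => by rw [(Finset.mem_filter.mp hi).2, pow_one],
      Finset.prod_const]
    exact pow_le_pow_of_le_one h0 (sub_le_self 1 hQ0) hc
  have hsum : (∑ i ∈ s.filter (fun i => ¬ d i = 1), d i : ℝ) ≤ ∑ i ∈ s, (d i : ℝ) :=
    Finset.sum_le_sum_of_subset_of_nonneg (Finset.filter_subset _ _) fun _ _ _ => by positivity
  have h₂ := one_sub_sum_div_le_prod_one_sub_inv_pow (s.filter fun i => ¬ d i = 1) d hQ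
    fun i hi => by
      obtain ⟨hi, hi1⟩ := Finset.mem_filter.mp hi
      have := hd i hi
      omega
  refine mul_le_mul h₁ (le_trans ?_ h₂) hY
    (Finset.prod_nonneg fun i hi => hfac i (Finset.filter_subset _ _ hi))
  gcongr

lemma three_fifths_le_one_sub_inv_pow {q : ℝ} (hq : 1 < q) {c : ℕ} (hc : 2 * c ≤ q - 1) :
    3 / 5 ≤ (1 - q⁻¹) ^ c := by
  have hq1 : 0 < q - 1 := by linarith
  have hbase : Real.exp (-(q - 1)⁻¹) ≤ 1 - q⁻¹ := by
    have h := Real.add_one_le_exp (q - 1)⁻¹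
    rw [Real.exp_neg, show 1 - q⁻¹ = (1 + (q - 1)⁻¹)⁻¹ by field_simp; ring]
    exact inv_anti₀ (by positivity) (by linarith)
  have hhalf : 3 / 5 ≤ Real.exp (-(1 / 2)) := by
    have he := Real.exp_one_lt_d9
    have hsq : Real.exp (1 / 2) * Real.exp (1 / 2) = Real.exp 1 := by
      rw [← Real.exp_add]; norm_num
    rw [Real.exp_neg, le_inv_comm₀ (by norm_num) (Real.exp_pos _)]
    nlinarith [Real.exp_pos (1 / 2)]
  calc (3 / 5 : ℝ) ≤ Real.exp (-(1 / 2)) := hhalf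
    _ ≤ Real.exp (-(q - 1)⁻¹) ^ c := by
        rw [← Real.exp_nat_mul, Real.exp_le_exp, mul_neg, neg_le_neg_iff, ← div_eq_mul_inv,
          div_le_iff₀ hq1]
        linarith
    _ ≤ (1 - q⁻¹) ^ c := pow_le_pow_left₀ (Real.exp_pos _).le hbase c

lemma sum_pow_sub_le {q : ℝ} (hq : 1 < q) {n : ℕ} {D : Finset ℕ} (hD : ∀ l ∈ D, 3 ≤ l ∧ l ≤ n) :
    ∑ l ∈ D, q ^ (n - l) ≤ q ^ (n - 2) / (q - 1) := by
  have hinj : Set.InjOn (n - ·) D := fun a ha b hb hab => by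
    have := hD a ha; have := hD b hb; simp only at hab; omega
  calc ∑ l ∈ D, q ^ (n - l) = ∑ j ∈ D.image (n - ·), q ^ j := (Finset.sum_image hinj).symm
    _ ≤ ∑ j ∈ Finset.range (n - 2), q ^ j := by
        refine Finset.sum_le_sum_of_subset_of_nonneg (fun j hj => ?_) fun j _ _ => by positivity
        obtain ⟨l, hl, rfl⟩ := Finset.mem_image.mp hj
        have := hD l hl
        exact Finset.mem_range.mpr (by omega)
    _ = (q ^ (n - 2) - 1) / (q - 1) := geom_sum_eq hq.ne' _
    _ ≤ q ^ (n - 2) / (q - 1) := div_le_div_of_nonneg_right (by linarith) (by linarith)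

-- `ordCompl[p] k` is notation for `k / p ^ k.factorization p`: the `ℕ` ascription keeps that
-- division in `ℕ` before the cast.
lemma sum_ordCompl_mul_pow_le {p ℓ m : ℕ} (hp : p.Prime) (hm : Even m) (hm0 : m ≠ 0)
    (hpm : ¬ p ∣ m) {q : ℝ} (hq : 1 < q) :
    ∑ l ∈ (p ^ ℓ * m).divisors.erase 1,
        ((ordCompl[p] (p ^ ℓ * m / l) : ℕ) : ℝ) * q ^ (p ^ ℓ * m - l) ≤
      m * (1 / 2 + 1 / (q - 1)) * q ^ (p ^ ℓ * m - 2) := by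
  set n := p ^ ℓ * m
  have hn : n ≠ 0 := mul_ne_zero (pow_ne_zero ℓ hp.ne_zero) hm0
  obtain ⟨m', rfl⟩ : ∃ m', m = 2 * m' := hm.two_dvd
  have h2 : 2 ∈ n.divisors.erase 1 := Finset.mem_erase.mpr
    ⟨by norm_num, Nat.mem_divisors.mpr ⟨Dvd.dvd.mul_left (dvd_mul_right 2 m') _, hn⟩⟩
  have hcompl2 : ordCompl[p] (n / 2) = m' := by
    rw [show n / 2 = p ^ ℓ * m' by
      simp only [n]; rw [mul_left_comm, Nat.mul_div_cancel_left _ two_pos]]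
    exact Nat.ordCompl_pow_mul_of_not_dvd ℓ hp fun h => hpm (h.mul_left 2)
  have hcompl : ∀ l ∈ n.divisors, ((ordCompl[p] (n / l) : ℕ) : ℝ) ≤ 2 * m' := fun l hl => by
    have := Nat.ordCompl_dvd_ordCompl_of_dvd (Nat.div_dvd_of_dvd (Nat.mem_divisors.mp hl).1) p
    rw [Nat.ordCompl_pow_mul_of_not_dvd ℓ hp hpm] at this
    exact_mod_cast Nat.le_of_dvd (by omega) this
  have hrest : ∑ l ∈ (n.divisors.erase 1).erase 2,
      ((ordCompl[p] (n / l) : ℕ) : ℝ) * q ^ (n - l) ≤ 2 * m' * (q ^ (n - 2) / (q - 1)) := by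
    refine (Finset.sum_le_sum fun l hl => mul_le_mul_of_nonneg_right
      (hcompl l (Finset.mem_of_mem_erase (Finset.mem_of_mem_erase hl))) (by positivity)).trans ?_
    rw [← Finset.mul_sum]
    refine mul_le_mul_of_nonneg_left (sum_pow_sub_le hq fun l hl => ?_) (by positivity)
    obtain ⟨hl2, hl1, hl⟩ : l ≠ 2 ∧ l ≠ 1 ∧ l ∈ n.divisors := by simpa using hl
    have := Nat.pos_of_dvd_of_pos (Nat.mem_divisors.mp hl).1 (Nat.pos_of_ne_zero hn)
    exact ⟨by omega, Nat.divisor_le hl⟩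
  rw [← Finset.add_sum_erase _ _ h2, hcompl2]
  push_cast
  have : 2 * m' * (1 / 2 + 1 / (q - 1)) * q ^ (n - 2) =
      m' * q ^ (n - 2) + 2 * m' * (q ^ (n - 2) / (q - 1)) := by ring
  linarith

end Estimates

section FrobeniusOrder

open UniqueFactorizationMonoid

variable {K L : Type*} [Field K] [Fintype K] [Field L] [Fintype L] [Algebra K L]
  {p : ℕ} [Fact p.Prime] [CharP K p] {e r : ℕ}

lemma card_not_isPolyOrder_frobEnd_le (hL : Fintype.card L = Fintype.card K ^ (p ^ e * r))
    (hr : ¬ p ∣ r) :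
    Nat.card {x : L // ¬ IsPolyOrder (frobEnd K L) (X ^ (p ^ e * r) - 1) x} ≤
      r * Fintype.card K ^ (p ^ e * r - 1) := by
  classical
  set N := p ^ e * r
  set F : K[X] := X ^ N - 1
  set s := (normalizedFactors F).toFinset
  have hr0 : r ≠ 0 := by rintro rfl; exact hr (dvd_zero p)
  have hF : F.Monic :=
    monic_X_pow_sub_one (mul_ne_zero (pow_ne_zero e (Fact.out : p.Prime).ne_zero) hr0)
  have hs : ∀ g ∈ s, g * (F /ₘ g) = F ∧ g.Monic ∧ 1 ≤ g.natDegree := fun g hg => by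
    obtain ⟨hgi, hgm, hgF⟩ := (mem_toFinset_normalizedFactors_iff hF.ne_zero).mp hg
    exact ⟨mul_divByMonic_eq_of_dvd hgm hgF, hgm, hgi.natDegree_pos⟩
  have hcover : {x | ¬ IsPolyOrder (frobEnd K L) F x} ⊆
      ⋃ g ∈ s, (LinearMap.ker (aeval (frobEnd K L) (F /ₘ g)) : Set L) := fun x hx => by
    obtain ⟨g, hg, hgx⟩ := exists_aeval_divByMonic_eq_zero_of_not_isPolyOrder hF.ne_zero
      (by rw [aeval_frobEnd_X_pow_sub_one hL]; rfl) hx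
    exact Set.mem_biUnion (Multiset.mem_toFinset.mpr hg) hgx
  have hker : ∀ g ∈ s, Nat.card (LinearMap.ker (aeval (frobEnd K L) (F /ₘ g))) ≤
      Fintype.card K ^ (N - 1) := fun g hg => by
    obtain ⟨hgF, hgm, hg1⟩ := hs g hg
    rw [card_ker_aeval_frobEnd hL (hgm.of_mul_monic_left (by rw [hgF]; exact hF))
      ⟨g, by rw [mul_comm, hgF]⟩,
      natDegree_divByMonic _ hgm, natDegree_X_pow_sub_one]
    exact Nat.pow_le_pow_right Fintype.card_pos (by omega)
  have hcard : s.card ≤ r := by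
    change (normalizedFactors (X ^ (p ^ e * r) - 1 : K[X])).toFinset.card ≤ r
    rw [X_pow_sub_one_eq_pow, normalizedFactors_pow,
      Multiset.toFinset_nsmul _ _ (pow_ne_zero e (Fact.out : p.Prime).ne_zero)]
    exact (card_toFinset_normalizedFactors_le (monic_X_pow_sub_one hr0)
      (squarefree_X_pow_sub_one hr)).trans_eq (natDegree_X_pow_sub_one r)
  calc Nat.card {x : L // ¬ IsPolyOrder (frobEnd K L) F x}
      = {x | ¬ IsPolyOrder (frobEnd K L) F x}.ncard := Nat.card_coe_set_eq _
    _ ≤ ∑ g ∈ s, (LinearMap.ker (aeval (frobEnd K L) (F /ₘ g)) : Set L).ncard :=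
        (Set.ncard_le_ncard hcover (Set.toFinite _)).trans (s.set_ncard_biUnion_le _)
    _ ≤ ∑ _g ∈ s, Fintype.card K ^ (N - 1) := Finset.sum_le_sum fun g hg =>
        (Nat.card_coe_set_eq _).symm.trans_le (hker g hg)
    _ ≤ r * Fintype.card K ^ (N - 1) := by
        rw [Finset.sum_const, smul_eq_mul]; exact Nat.mul_le_mul_right _ hcard

lemma card_isPolyOrder_frobEnd_ge (hL : Fintype.card L = Fintype.card K ^ (p ^ e * r))
    (hr : ¬ p ∣ r) :
    (Fintype.card K : ℝ) ^ (p ^ e * r) * ((1 - (Fintype.card K : ℝ)⁻¹) ^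
        (nthRootsFinset r (1 : K)).card * (1 - r / (2 * (Fintype.card K : ℝ) ^ 2))) ≤
      Nat.card {x : L // IsPolyOrder (frobEnd K L) (X ^ (p ^ e * r) - 1) x} := by
  classical
  set s := (normalizedFactors (X ^ r - 1 : K[X])).toFinset
  have hr0 : r ≠ 0 := by rintro rfl; exact hr (dvd_zero p)
  have hXr : (X ^ r - 1 : K[X]).Monic := monic_X_pow_sub_one hr0
  have hs := fun g (hg : g ∈ s) => (mem_toFinset_normalizedFactors_iff hXr.ne_zero).mp hg
  have hterm : ∀ g ∈ s, (Nat.card {x : L // IsPolyOrder (frobEnd K L) (g ^ p ^ e) x} : ℝ) =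
      (Fintype.card K : ℝ) ^ (p ^ e * g.natDegree) *
        (1 - (Fintype.card K : ℝ)⁻¹ ^ g.natDegree) := fun g hg =>
    card_isPolyOrder_frobEnd_pow hL (hs g hg).2.1 (hs g hg).1
      (pow_ne_zero e (Fact.out : p.Prime).ne_zero)
      (X_pow_sub_one_eq_prod (K := K) e hr ▸ Finset.dvd_prod_of_mem (· ^ p ^ e) hg)
  have hroots : (s.filter fun g => g.natDegree = 1).card ≤ (nthRootsFinset r (1 : K)).card := by
    convert card_filter_natDegree_eq_one_le hXr.ne_zero using 2
    simp [nthRootsFinset_def, nthRoots]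
  have hsum := sum_natDegree_toFinset_normalizedFactors hXr (squarefree_X_pow_sub_one hr)
  rw [natDegree_X_pow_sub_one] at hsum
  have hsumR : (∑ g ∈ s, (g.natDegree : ℝ)) = r := by exact_mod_cast hsum
  rw [X_pow_sub_one_eq_prod e hr, card_isPolyOrder_prod s _
      (pairwise_isCoprime_pow_toFinset_normalizedFactors _ _), Nat.cast_prod,
    Finset.prod_congr rfl hterm, Finset.prod_mul_distrib, Finset.prod_pow_eq_pow_sum,
    ← Finset.mul_sum, hsum]
  refine mul_le_mul_of_nonneg_left ?_ (by positivity)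
  have := pow_mul_le_prod_one_sub_inv_pow s natDegree (Q := Fintype.card K)
    (by exact_mod_cast Fintype.card_pos) (fun g hg => (hs g hg).1.natDegree_pos) hroots
  rwa [hsumR] at this

lemma card_not_isPolyOrder_frobEnd_le_of_not_dvd
    (hL : Fintype.card L = Fintype.card K ^ (p ^ e * r)) (hr : ¬ p ∣ r)
    (hKr : ¬ (Fintype.card K - 1) ∣ r) :
    (Nat.card {x : L // ¬ IsPolyOrder (frobEnd K L) (X ^ (p ^ e * r) - 1) x} : ℝ) ≤
      (Fintype.card K : ℝ) ^ (p ^ e * r) *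
        (1 - 3 / 5 * (1 - r / (2 * (Fintype.card K : ℝ) ^ 2))) := by
  set Q := Fintype.card K
  set P := fun x : L => IsPolyOrder (frobEnd K L) (X ^ (p ^ e * r) - 1) x
  have hQ : (1 : ℝ) < Q := by exact_mod_cast Fintype.one_lt_card
  have hcompl : (Nat.card {x // ¬ P x} : ℝ) = Q ^ (p ^ e * r) - Nat.card {x // P x} := by
    rw [eq_sub_iff_add_eq, ← Nat.cast_add, add_comm, ← Nat.cast_pow, ← hL,
      ← Nat.card_eq_fintype_card]
    exact_mod_cast Set.ncard_add_ncard_compl {x | P x}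
  have h35 : (3 / 5 : ℝ) ≤ (1 - (Q : ℝ)⁻¹) ^ (nthRootsFinset r (1 : K)).card := by
    refine three_fifths_le_one_sub_inv_pow hQ ?_
    rw [show (Q : ℝ) - 1 = ((Q - 1 : ℕ) : ℝ) by rw [Nat.cast_sub Fintype.card_pos, Nat.cast_one]]
    exact_mod_cast two_mul_card_nthRootsFinset_le hKr
  have hge := card_isPolyOrder_frobEnd_ge hL hr
  have hQN : (0 : ℝ) < Q ^ (p ^ e * r) := by positivity
  rw [hcompl]
  rcases le_or_gt 0 (1 - r / (2 * (Q : ℝ) ^ 2)) with hY | hY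
  · nlinarith [mul_le_mul_of_nonneg_right h35 hY]
  · nlinarith [(Nat.card {x // P x}).cast_nonneg (α := ℝ)]

end FrobeniusOrder

section Subfield

variable {E : Type*} [Field E] [Finite E]

lemma Subfield.coe_eq_setOf_pow_natCard (S : Subfield E) :
    (S : Set E) = {x | x ^ Nat.card S = x} := by
  classical
  have hQ : 1 < Nat.card S := Finite.one_lt_card
  refine Set.eq_of_subset_of_ncard_le (fun x hx => ?_) ?_ (Set.toFinite _)
  · have := Fintype.ofFinite S
    have := FiniteField.pow_card (⟨x, hx⟩ : S)
    rw [Fintype.card_eq_nat_card] at this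
    exact congrArg Subtype.val this
  calc {x : E | x ^ Nat.card S = x}.ncard
      ≤ (X ^ Nat.card S - X : E[X]).roots.toFinset.card := by
        rw [← Set.ncard_coe_finset]
        refine Set.ncard_le_ncard (fun x hx => ?_) (Finset.finite_toSet _)
        rw [Finset.mem_coe, Multiset.mem_toFinset,
          mem_roots (FiniteField.X_pow_card_sub_X_ne_zero E hQ), IsRoot, eval_sub, eval_pow,
          eval_X, sub_eq_zero]
        exact hx
    _ ≤ (X ^ Nat.card S - X : E[X]).natDegree :=
        (Multiset.toFinset_card_le _).trans (card_roots' _)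
    _ = (S : Set E).ncard := by
        rw [FiniteField.X_pow_card_sub_X_natDegree_eq E hQ]; exact Nat.card_coe_set_eq _

lemma Subfield.eq_of_natCard_eq {S T : Subfield E} (h : Nat.card S = Nat.card T) : S = T :=
  SetLike.ext' (by rw [S.coe_eq_setOf_pow_natCard, T.coe_eq_setOf_pow_natCard, h])

end Subfield

section CompletelyNormal

noncomputable def nonNormalCount (q l n : ℕ) (E : Type) [Field E] : ℕ :=
  Nat.card {x : E // ∃ S : Subfield E, Nat.card S = q ^ l ∧ ¬ IsNormalElementOver q l n S x}

variable {E : Type} [Field E] [Fintype E] {q l n : ℕ}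

lemma IsPolyOrder.isNormalElementOver (hE : Fintype.card E = q ^ n) (hl : l ∣ n)
    {S : Subfield E} [Fintype S] (hS : Fintype.card S = q ^ l) {x : E}
    (hx : IsPolyOrder (frobEnd S E) (X ^ (n / l) - 1) x) : IsNormalElementOver q l n S x := by
  have hrank : Module.finrank S E = n / l := by
    refine Nat.pow_right_injective (hS ▸ Fintype.one_lt_card) ?_
    simp only [← hS]
    rw [← Module.card_eq_pow_finrank, hE, hS, ← pow_mul, Nat.mul_div_cancel' hl]
  have : NeZero (n / l) := ⟨hrank ▸ Module.finrank_pos.ne'⟩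
  refine ⟨basisOfLinearIndependentOfCardEqFinrank
    (hx.linearIndependent (natDegree_X_pow_sub_one _).ge) (by simp [hrank]), fun i => ?_⟩
  rw [coe_basisOfLinearIndependentOfCardEqFinrank, frobEnd_pow_apply, hS]

lemma card_not_isNormalElementOver_le (hE : Fintype.card E = q ^ n) (hl : l ∣ n)
    {S : Subfield E} [Fintype S] (hS : Fintype.card S = q ^ l) :
    Nat.card {x : E // ¬ IsNormalElementOver q l n S x} ≤
      Nat.card {x : E // ¬ IsPolyOrder (frobEnd S E) (X ^ (n / l) - 1) x} :=
  Nat.card_mono (Set.toFinite _) fun _ hx hord => hx (hord.isNormalElementOver hE hl hS)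

lemma card_le_CN_add_sum_nonNormalCount (hn : n ≠ 0) :
    Nat.card E ≤ CN q n E + ∑ l ∈ n.divisors, nonNormalCount q l n E := by
  have hcompl : {x : E | IsCompletelyNormal q n x}ᶜ ⊆ ⋃ l ∈ n.divisors,
      {x | ∃ S : Subfield E, Nat.card S = q ^ l ∧ ¬ IsNormalElementOver q l n S x} := by
    intro x hx
    simp only [IsCompletelyNormal, Set.mem_compl_iff, Set.mem_ofPred_eq, not_forall] at hx
    obtain ⟨l, hl, S, hS, hx⟩ := hx
    exact Set.mem_biUnion (Nat.mem_divisors.mpr ⟨hl, hn⟩) ⟨S, hS, hx⟩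
  rw [← Set.ncard_add_ncard_compl {x : E | IsCompletelyNormal q n x}]
  exact add_le_add (Nat.card_coe_set_eq _).ge
    ((Set.ncard_le_ncard hcompl (Set.toFinite _)).trans (n.divisors.set_ncard_biUnion_le _))

lemma nonNormalCount_le {B : ℝ} (hB0 : 0 ≤ B)
    (hB : ∀ S : Subfield E, Nat.card S = q ^ l →
      (Nat.card {x : E // ¬ IsNormalElementOver q l n S x} : ℝ) ≤ B) :
    (nonNormalCount q l n E : ℝ) ≤ B := by
  by_cases h : ∃ S : Subfield E, Nat.card S = q ^ l
  · obtain ⟨S, hS⟩ := h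
    have hset : {x : E | ∃ T : Subfield E, Nat.card T = q ^ l ∧ ¬ IsNormalElementOver q l n T x} =
        {x | ¬ IsNormalElementOver q l n S x} := by
      ext x
      refine ⟨fun ⟨T, hT, hx⟩ => ?_, fun hx => ⟨S, hS, hx⟩⟩
      rwa [Subfield.eq_of_natCard_eq (hT.trans hS.symm)] at hx
    rw [nonNormalCount, ← Set.coe_ofPred, hset]
    exact hB S hS
  · have : IsEmpty
        {x : E // ∃ S : Subfield E, Nat.card S = q ^ l ∧ ¬ IsNormalElementOver q l n S x} :=
      ⟨fun ⟨_, S, hS, _⟩ => h ⟨S, hS⟩⟩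
    rw [nonNormalCount, Nat.card_of_isEmpty, Nat.cast_zero]
    exact hB0

variable {p : ℕ} [Fact p.Prime] [CharP E p]

lemma nonNormalCount_le_ordCompl (hE : Fintype.card E = q ^ n) (hl : l ∣ n) :
    (nonNormalCount q l n E : ℝ) ≤ ((ordCompl[p] (n / l) : ℕ) : ℝ) * (q : ℝ) ^ (n - l) := by
  have hn : n ≠ 0 := by
    rintro rfl
    exact Fintype.one_lt_card.ne' (by simpa using hE)
  have hN : n / l ≠ 0 := (Nat.div_pos (Nat.le_of_dvd (Nat.pos_of_ne_zero hn) hl)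
    (Nat.pos_of_dvd_of_pos hl (Nat.pos_of_ne_zero hn))).ne'
  refine nonNormalCount_le (by positivity) fun S hS => ?_
  have := Fintype.ofFinite S
  have hS' : Fintype.card S = q ^ l := by rwa [Fintype.card_eq_nat_card]
  have : CharP S p := RingHom.charP S.subtype Subtype.coe_injective p
  have hL : Fintype.card E = Fintype.card S ^ (ordProj[p] (n / l) * ordCompl[p] (n / l)) := by
    rw [Nat.ordProj_mul_ordCompl_eq_self, hS', hE, ← pow_mul, Nat.mul_div_cancel' hl]
  have h := card_not_isPolyOrder_frobEnd_le hL (Nat.not_dvd_ordCompl (Fact.out : p.Prime) hN)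
  rw [Nat.ordProj_mul_ordCompl_eq_self, hS', ← pow_mul, Nat.mul_sub_one,
    Nat.mul_div_cancel' hl] at h
  exact_mod_cast (card_not_isNormalElementOver_le hE hl hS').trans h

lemma nonNormalCount_one_le {ℓ m : ℕ} (hE : Fintype.card E = q ^ (p ^ ℓ * m)) (hpm : ¬ p ∣ m)
    (hqm : ¬ (q - 1) ∣ m) :
    (nonNormalCount q 1 (p ^ ℓ * m) E : ℝ) ≤
      (q : ℝ) ^ (p ^ ℓ * m) * (1 - 3 / 5 * (1 - m / (2 * (q : ℝ) ^ 2))) := by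
  refine nonNormalCount_le ?_ fun S hS => ?_
  · have : 0 ≤ (m : ℝ) / (2 * (q : ℝ) ^ 2) := by positivity
    have : 0 ≤ 1 - 3 / 5 * (1 - m / (2 * (q : ℝ) ^ 2)) := by linarith
    positivity
  have := Fintype.ofFinite S
  have hS' : Fintype.card S = q := by rw [Fintype.card_eq_nat_card, hS, pow_one]
  have : CharP S p := RingHom.charP S.subtype Subtype.coe_injective p
  have h := card_not_isPolyOrder_frobEnd_le_of_not_dvd (hS'.symm ▸ hE) hpm (hS'.symm ▸ hqm)
  rw [hS'] at h
  refine (Nat.cast_le.mpr (card_not_isNormalElementOver_le hE (one_dvd _)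
    (hS'.trans (pow_one q).symm))).trans ?_
  simpa only [Nat.div_one] using h

lemma sum_nonNormalCount_le {ℓ m : ℕ} (hE : Fintype.card E = q ^ (p ^ ℓ * m)) (hq : 9 ≤ q)
    (hm : Even m) (hm0 : m ≠ 0) (hpm : ¬ p ∣ m) (hqm : ¬ (q - 1) ∣ m) :
    ∑ l ∈ (p ^ ℓ * m).divisors, (nonNormalCount q l (p ^ ℓ * m) E : ℝ) ≤
      (q : ℝ) ^ (p ^ ℓ * m) * (2 / 5 + 37 / 40 * (m / (q : ℝ) ^ 2)) := by
  set n := p ^ ℓ * m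
  have hp := (Fact.out : p.Prime)
  have hn : n ≠ 0 := mul_ne_zero (pow_ne_zero ℓ hp.ne_zero) hm0
  have hq' : (9 : ℝ) ≤ q := by exact_mod_cast hq
  have h1 := nonNormalCount_one_le hE hpm hqm
  have h2 := (Finset.sum_le_sum fun l hl => nonNormalCount_le_ordCompl (E := E) (p := p) hE
    (Nat.dvd_of_mem_divisors (Finset.mem_of_mem_erase hl))).trans
    (sum_ordCompl_mul_pow_le hp hm hm0 hpm (q := q) (by linarith))
  set Y := (q : ℝ) ^ (n - 2)
  have hqn : (q : ℝ) ^ n = Y * q ^ 2 := by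
    rw [← pow_add, Nat.sub_add_cancel ((Nat.le_of_dvd (Nat.pos_of_ne_zero hm0) hm.two_dvd).trans
      (Nat.le_mul_of_pos_left m (pow_pos hp.pos ℓ)))]
  have hq2 : (1 : ℝ) / (q - 1) ≤ 1 / 8 := by gcongr; linarith
  have hq0 : (q : ℝ) ^ 2 ≠ 0 := by positivity
  rw [← Finset.add_sum_erase _ _ (Nat.one_mem_divisors.mpr hn)]
  rw [hqn] at h1 ⊢
  calc (nonNormalCount q 1 n E : ℝ) + ∑ l ∈ n.divisors.erase 1, (nonNormalCount q l n E : ℝ)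
      ≤ (2 / 5 * (Y * q ^ 2) + 3 / 10 * (m * Y)) + m * (1 / 2 + 1 / 8) * Y := by
        refine add_le_add (h1.trans_eq (by field_simp; ring)) (h2.trans ?_)
        gcongr
    _ = Y * q ^ 2 * (2 / 5 + 37 / 40 * (m / (q : ℝ) ^ 2)) := by field_simp; ring

end CompletelyNormal

theorem cn_corollary_wild_even_general (p q ℓ m : ℕ) (hp : p.Prime) (hq : ∃ k : ℕ, 0 < k ∧ q = p ^ k)
    (hq9 : 9 ≤ q) (hm : 1 ≤ m) (hmeven : Even m)
    (hcop : Nat.gcd m p = 1) (hnd : ¬ (q - 1) ∣ m)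
    (E : Type) [Field E] [Fintype E] (hE : Fintype.card E = q ^ (p ^ ℓ * m)) :
    (CN q (p ^ ℓ * m) E : ℝ) ≥ (q : ℝ) ^ (p ^ ℓ * m) *
      (1 / 2 + 1 / ((q : ℝ) + 1) - 0.96 * m / (q : ℝ) ^ 2) := by
  obtain ⟨k, -, hqk⟩ := hq
  have := Fact.mk hp
  have : CharP E p := charP_of_card_eq_prime_pow (hE.trans (by rw [hqk, ← pow_mul]))
  have hpm : ¬ p ∣ m := hp.coprime_iff_not_dvd.mp (Nat.Coprime.symm hcop)
  have hCN : (q : ℝ) ^ (p ^ ℓ * m) ≤ CN q (p ^ ℓ * m) E +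
      ∑ l ∈ (p ^ ℓ * m).divisors, (nonNormalCount q l (p ^ ℓ * m) E : ℝ) := by
    have := card_le_CN_add_sum_nonNormalCount (q := q) (E := E)
      (mul_ne_zero (pow_ne_zero ℓ hp.ne_zero) (by omega : m ≠ 0))
    rw [Nat.card_eq_fintype_card, hE] at this
    exact_mod_cast this
  have hsum := sum_nonNormalCount_le hE hq9 hmeven (by omega) hpm hnd
  have hq1 : (1 : ℝ) / (q + 1) ≤ 1 / 10 := by
    gcongr
    exact_mod_cast (by omega : 10 ≤ q + 1)
  have hqn : (0 : ℝ) < (q : ℝ) ^ (p ^ ℓ * m) := by positivity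
  have ht : (0 : ℝ) ≤ m / (q : ℝ) ^ 2 := by positivity
  rw [mul_div_assoc]
  nlinarith [mul_le_mul_of_nonneg_left hq1 hqn.le, mul_nonneg hqn.le ht]

/-- Corollary 3.3(1): for `q ≥ 9` a power of the prime `p`, `n = p^ℓ·m` with `ℓ ≥ 1`,
`m` even, `1 ≤ m < 2q²`, `gcd(m,p) = 1` and `q - 1 ∤ m`,
`CN_q(n) ≥ q^n·(1/2 + 1/(q+1) - 0.96·m/q²)`. -/
theorem cn_corollary_wild_even (p q ℓ m : ℕ) (hp : p.Prime) (hq : ∃ k : ℕ, 0 < k ∧ q = p ^ k)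
    (hq9 : 9 ≤ q) (hℓ : 1 ≤ ℓ) (hm : 1 ≤ m) (hm2 : m < 2 * q ^ 2) (hmeven : Even m)
    (hcop : Nat.gcd m p = 1) (hnd : ¬ (q - 1) ∣ m)
    (E : Type) [Field E] [Fintype E] (hE : Fintype.card E = q ^ (p ^ ℓ * m)) :
    (CN q (p ^ ℓ * m) E : ℝ) ≥ (q : ℝ) ^ (p ^ ℓ * m) *
      (1 / 2 + 1 / ((q : ℝ) + 1) - 0.96 * m / (q : ℝ) ^ 2) :=
  cn_corollary_wild_even_general p q ℓ m hp hq hq9 hm hmeven hcop hnd E hE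
end

section
/- Let q be a prime power, n a positive integer, q' the square-free part of q^n−1, and r a divisor of q'. Let r_1, …, r_t be divisors of r such that gcd(r_i, r_j) = r_0 for all i ≠ j and lcm(r_1, …, r_t) = r. Then CN_q^r(n) ≥ Σ_{i=1}^t CN_q^{r_i}(n) − (t−1)·CN_q^{r_0}(n). -/
open Polynomial

/-!
An element of `U = {r₀-free}` that lies in every `Aᵢ = {rᵢ-free}` is `r`-free, because a prime
dividing `r = lcm rᵢ` divides some `rᵢ`. So `U \ T ⊆ ⋃ᵢ (U \ Aᵢ)` with `T = {r-free}`, and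
`∑ᵢ |Aᵢ| = t|U| - ∑ᵢ |U \ Aᵢ| ≤ t|U| - |U \ T| ≤ (t - 1)|U| + |T|`.
The inclusions `Aᵢ ⊆ U` need `r₀ ∣ rᵢ`, which the gcd hypothesis gives as soon as `t ≥ 2`;
for `t = 1` the inequality is trivial.
-/

open Finset

theorem Finset.sum_card_le_card_add_mul_card {ι α K : Type*} [Fintype ι] [DecidableEq α]
    [CommRing K] [LinearOrder K] [IsStrictOrderedRing K]
    (A : ι → Finset α) (U T : Finset α) (hAU : ∀ i, A i ⊆ U)
    (hUT : ∀ x ∈ U, (∀ i, x ∈ A i) → x ∈ T) :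
    ∑ i, (#(A i) : K) ≤ #T + (Fintype.card ι - 1) * #U := by
  have hA : ∀ i, (#(A i) : K) = #U - #(U \ A i) := fun i => by
    rw [card_sdiff_of_subset (hAU i), Nat.cast_sub (card_le_card (hAU i))]; ring
  have hcover : U \ T ⊆ univ.biUnion fun i => U \ A i := fun x hx => by
    obtain ⟨hxU, hxT⟩ := mem_sdiff.mp hx
    obtain ⟨i, hi⟩ : ∃ i, x ∉ A i := by
      by_contra! h
      exact hxT (hUT x hxU h)
    exact mem_biUnion.mpr ⟨i, mem_univ i, mem_sdiff.mpr ⟨hxU, hi⟩⟩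
  have hUT_card : (#(U \ T) : K) ≤ ∑ i, (#(U \ A i) : K) := by
    exact_mod_cast (card_le_card hcover).trans card_biUnion_le
  have hU : (#U : K) ≤ #(U \ T) + #T := by exact_mod_cast card_le_card_sdiff_add_card
  simp only [hA, sum_sub_distrib, sum_const, card_univ, nsmul_eq_mul]
  linarith

section Free

variable {E : Type} [Field E]

theorem IsFree.of_dvd {a b : ℕ} {x : E} (hab : a ∣ b) (hx : IsFree b x) : IsFree a x :=
  fun d hd hy => hx d (hd.trans hab) hy

theorem isFree_iff_forall_prime {r : ℕ} {x : E} :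
    IsFree r x ↔ ∀ p, p.Prime → p ∣ r → ¬∃ y : E, x = y ^ p := by
  refine ⟨fun hx p hp hpr hy => hp.ne_one (hx p hpr hy), fun h d hdr ⟨y, hy⟩ => ?_⟩
  by_contra hd
  obtain ⟨p, hp, hpd⟩ := Nat.exists_prime_and_dvd hd
  refine h p hp (hpd.trans hdr) ⟨y ^ (d / p), ?_⟩
  rw [hy, ← pow_mul, Nat.div_mul_cancel hpd]

theorem isFree_finset_lcm {ι : Type*} {s : Finset ι} {R : ι → ℕ} {x : E}
    (hx : ∀ i ∈ s, IsFree (R i) x) : IsFree (s.lcm R) x := by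
  refine isFree_iff_forall_prime.mpr fun p hp hpr => ?_
  obtain ⟨i, hi, hpi⟩ := hp.prime.exists_mem_finset_dvd (hpr.trans (s.lcm_dvd_prod R))
  exact isFree_iff_forall_prime.mp (hx i hi) p hp hpi

end Free

theorem dvd_of_forall_ne_gcd_eq {t r₀ : ℕ} {R : Fin t → ℕ} (ht : t ≠ 1)
    (hgcd : ∀ i j, i ≠ j → Nat.gcd (R i) (R j) = r₀) (i : Fin t) : r₀ ∣ R i := by
  obtain ⟨j, hji⟩ : ∃ j : Fin t, j ≠ i := by
    by_contra! h
    exact ht (Fintype.card_fin t ▸ Fintype.card_eq_one_iff.mpr ⟨i, h⟩)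
  exact hgcd i j hji.symm ▸ Nat.gcd_dvd_left _ _

theorem sieving_inequality_general (q n r r₀ t : ℕ)
    (R : Fin t → ℕ)
    (hgcd : ∀ i j, i ≠ j → Nat.gcd (R i) (R j) = r₀)
    (hlcm : Finset.univ.lcm R = r)
    (E : Type) [Field E] [Fintype E] :
    (CNfree q n r E : ℝ) ≥
      (∑ i : Fin t, (CNfree q n (R i) E : ℝ)) - ((t : ℝ) - 1) * CNfree q n r₀ E := by
  classical
  obtain rfl | ht := eq_or_ne t 1
  · simp [← hlcm]
  let S : ℕ → Finset E := fun s => {x | IsFree s x ∧ IsCompletelyNormal q n x}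
  have hcard : ∀ s, CNfree q n s E = #(S s) := fun s => by
    rw [CNfree, Nat.card_eq_fintype_card, Fintype.card_subtype]
  have hsieve := Finset.sum_card_le_card_add_mul_card (K := ℝ) (fun i => S (R i)) (S r₀) (S r)
    (fun i x hx => by
      simp only [S, mem_filter, mem_univ, true_and] at hx ⊢
      exact ⟨hx.1.of_dvd (dvd_of_forall_ne_gcd_eq ht hgcd i), hx.2⟩)
    (fun x hx hxA => by
      simp only [S, mem_filter, mem_univ, true_and] at hx hxA ⊢
      exact ⟨hlcm ▸ isFree_finset_lcm fun i _ => (hxA i).1, hx.2⟩)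
  simp only [hcard, Fintype.card_fin] at hsieve ⊢
  linarith

/-- Proposition 5.2 (sieving inequality): if `r₁, …, r_t` are divisors of `r ∣ q'`
(`q'` the squarefree part of `q^n - 1`) with pairwise gcd `r₀` and lcm `r`, then
`CN_q^r(n) ≥ Σᵢ CN_q^{rᵢ}(n) - (t-1)·CN_q^{r₀}(n)`. -/
theorem sieving_inequality (q n r r₀ t : ℕ) (hq : IsPrimePow q) (hn : 0 < n)
    (hr : r ∣ natSqfreePart (q ^ n - 1))
    (R : Fin t → ℕ) (hR : ∀ i, R i ∣ r)
    (hgcd : ∀ i j, i ≠ j → Nat.gcd (R i) (R j) = r₀)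
    (hlcm : Finset.univ.lcm R = r)
    (E : Type) [Field E] [Fintype E] (hE : Fintype.card E = q ^ n) :
    (CNfree q n r E : ℝ) ≥
      (∑ i : Fin t, (CNfree q n (R i) E : ℝ)) - ((t : ℝ) - 1) * CNfree q n r₀ E :=
  sieving_inequality_general q n r r₀ t R hgcd hlcm E
end

section
/- Let q be a prime power and n a positive integer. Then CN_q(n) ≥ q^n · (1 − Σ_{d | n} (1 − φ_d(X^{n/d}−1)/q^n)), where for each divisor d of n, φ_d(X^{n/d}−1) is the polynomial Euler function of X^{n/d}−1 computed in F_{q^d}[X]. -/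
open Polynomial

/-!
Over `K = 𝔽_{q^d}` the Frobenius `x ↦ x ^ q^d` makes `E = 𝔽_{q^n}` a `K[X]`-module whose
annihilator is generated by `X^(n/d) - 1`, a polynomial of degree `n/d = dim_K E`. Hence this
module is cyclic, isomorphic to `K[X] ⧸ (X^(n/d) - 1)`, and the normal elements over `K` are
exactly its generators, which correspond to the units of the quotient: there are
`φ_d(X^(n/d) - 1)` of them. Since a subfield of `E` is determined by its size, an element is
completely normal iff it is normal over each `K d`, and a union bound over the divisors `d`
of `n` gives the estimate.
-/

open Module Submodule

section Cyclic

variable {R M : Type*} [CommRing R] [AddCommGroup M] [Module R M]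

theorem Ideal.Quotient.span_singleton_eq_top_iff_isUnit {I : Ideal R} (a : R ⧸ I) :
    Submodule.span R {a} = ⊤ ↔ IsUnit a := by
  rw [← restrictScalars_span R (R ⧸ I) Ideal.Quotient.mk_surjective, restrictScalars_eq_top_iff,
    ← Ideal.span, Ideal.span_singleton_eq_top]

theorem LinearEquiv.span_singleton_eq_top_iff {N : Type*} [AddCommGroup N] [Module R N]
    (e : M ≃ₗ[R] N) (m : M) : span R {e m} = ⊤ ↔ span R {m} = ⊤ := by
  rw [← Set.image_singleton, ← LinearEquiv.coe_coe, ← map_span, Submodule.map_eq_top_iff]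

theorem natCard_span_singleton_eq_top_of_equiv_quotient {I : Ideal R} (e : (R ⧸ I) ≃ₗ[R] M) :
    Nat.card {m : M // span R {m} = ⊤} = Nat.card (R ⧸ I)ˣ := by
  refine Nat.card_congr ((e.symm.toEquiv.subtypeEquiv fun m => ?_).trans
    (Equiv.ofInjective _ Units.val_injective).symm)
  rw [← e.symm.span_singleton_eq_top_iff, Ideal.Quotient.span_singleton_eq_top_iff_isUnit]
  rfl

end Cyclic

namespace FiniteField

variable (K L : Type*) [Field K] [Fintype K] [Field L] [Algebra K L]

local notation "σ" => AlgHom.toLinearMap (frobeniusAlgHom K L)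

theorem frobeniusAlgHom_toLinearMap_pow_apply (i : ℕ) (x : L) :
    (σ ^ i) x = x ^ Fintype.card K ^ i := by
  rw [Module.End.coe_pow]
  simp [coe_frobeniusAlgHom, pow_iterate]

variable [Finite L]

theorem exists_linearEquiv_quotient_frobenius :
    Nonempty ((K[X] ⧸ Ideal.span {(X : K[X]) ^ finrank K L - 1}) ≃ₗ[K[X]] AEval' σ) := by
  -- `K[X]` is a PID, so some `x` has the annihilator of the whole module, `(minpoly σ)`;
  -- the induced injection from the quotient is onto since both sides have `K`-dimension `m`.
  obtain ⟨x, hx⟩ := exists_ker_toSpanSingleton_eq_annihilator K[X] (AEval' σ)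
  rw [← span_minpoly_eq_annihilator, minpoly_frobeniusAlgHom] at hx
  let φ := (Ideal.span {(X : K[X]) ^ finrank K L - 1}).liftQ _ hx.ge
  have hinj : Function.Injective φ := LinearMap.ker_eq_bot.mp (ker_liftQ_eq_bot' _ _ hx.symm)
  have := Module.Finite.of_injective (φ.restrictScalars K) hinj
  have hdim : finrank K (K[X] ⧸ Ideal.span {(X : K[X]) ^ finrank K L - 1}) =
      finrank K (AEval' σ) := by
    rw [finrank_quotient_span_eq_natDegree, ← (AEval'.of σ).finrank_eq]
    simpa using natDegree_X_pow_sub_C (n := finrank K L) (r := (1 : K))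
  have hsurj : Function.Surjective (φ.restrictScalars K) :=
    (LinearMap.injective_iff_surjective_of_finrank_eq_finrank hdim).mp hinj
  exact ⟨LinearEquiv.ofBijective φ ⟨hinj, hsurj⟩⟩

theorem span_range_frobenius_pow_eq_top_iff (x : L) :
    span K (Set.range fun i : Fin (finrank K L) => x ^ Fintype.card K ^ (i : ℕ)) = ⊤ ↔
      span K[X] {AEval'.of σ x} = ⊤ := by
  have hrange : (Set.range fun i : Fin (finrank K L) => x ^ Fintype.card K ^ (i : ℕ)) =
      Set.range fun i : ℕ => (σ ^ i) x := by
    have hσ : σ ^ finrank K L = 1 := by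
      have := minpoly.aeval K σ
      rwa [minpoly_frobeniusAlgHom, map_sub, map_pow, aeval_X, map_one,
        sub_eq_zero] at this
    ext y
    simp only [Set.mem_range, ← frobeniusAlgHom_toLinearMap_pow_apply]
    constructor
    · rintro ⟨i, rfl⟩
      exact ⟨i, rfl⟩
    · rintro ⟨i, rfl⟩
      exact ⟨⟨i % _, Nat.mod_lt _ finrank_pos⟩, by rw [pow_eq_pow_mod i hσ]⟩
  have hX : span K (Set.range fun i : ℕ => (X : K[X]) ^ i) = ⊤ := by
    simpa [coe_basisMonomials, monomial_one_right_eq_X_pow] using (basisMonomials K).span_eq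
  have hspan : (span K[X] {AEval'.of σ x}).restrictScalars K =
      (span K (Set.range fun i : ℕ => (σ ^ i) x)).map (AEval'.of σ).toLinearMap := by
    rw [← span_smul_of_span_eq_top hX, map_span, Set.smul_singleton, ← Set.range_comp,
      ← Set.range_comp]
    congr 2
    ext i
    simp [AEval'.X_pow_smul_of]
  rw [hrange, ← Submodule.map_eq_top_iff (e := AEval'.of σ), ← hspan,
    restrictScalars_eq_top_iff]

theorem exists_basis_frobenius_pow_iff {m : ℕ} (hm : finrank K L = m) (x : L) :
    (∃ B : Basis (Fin m) K L, ∀ i, B i = x ^ Fintype.card K ^ (i : ℕ)) ↔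
      span K[X] {AEval'.of σ x} = ⊤ := by
  subst hm
  rw [← span_range_frobenius_pow_eq_top_iff]
  constructor
  · rintro ⟨B, hB⟩
    rw [← B.span_eq, ← funext hB]
  · intro h
    exact ⟨basisOfTopLeSpanOfCardEqFinrank _ h.ge (Fintype.card_fin _), by simp⟩

theorem natCard_exists_basis_frobenius_pow {m : ℕ} (hm : finrank K L = m) :
    Nat.card {x : L // ∃ B : Basis (Fin m) K L, ∀ i, B i = x ^ Fintype.card K ^ (i : ℕ)} =
      Nat.card (K[X] ⧸ Ideal.span {(X : K[X]) ^ m - 1})ˣ := by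
  subst hm
  obtain ⟨e⟩ := exists_linearEquiv_quotient_frobenius K L
  rw [← natCard_span_singleton_eq_top_of_equiv_quotient e]
  exact Nat.card_congr ((AEval'.of σ).toEquiv.subtypeEquiv
    (exists_basis_frobenius_pow_iff K L rfl))

end FiniteField

theorem Subfield.coe_eq_setOf_pow_natCard_eq_self {E : Type*} [Field E] (K : Subfield E)
    [Finite K] : (K : Set E) = {x | x ^ Nat.card K = x} := by
  classical
  have hK : (K : Set E) ⊆ {x | x ^ Nat.card K = x} := fun x hx => by
    have := Fintype.ofFinite K
    simpa [Nat.card_eq_fintype_card] using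
      congrArg Subtype.val (FiniteField.pow_card (⟨x, hx⟩ : K))
  have hc : 1 < Nat.card K := Finite.one_lt_card
  have hP := FiniteField.X_pow_card_sub_X_ne_zero E hc
  have hroots : {x : E | x ^ Nat.card K = x} ⊆ (X ^ Nat.card K - X : E[X]).roots.toFinset :=
    fun x hx => by
      rw [Finset.mem_coe, Multiset.mem_toFinset, mem_roots hP, IsRoot.def, eval_sub, eval_pow,
        eval_X, sub_eq_zero]
      exact hx
  refine Set.eq_of_subset_of_ncard_le hK ?_ ((Finset.finite_toSet _).subset hroots)
  calc {x : E | x ^ Nat.card K = x}.ncard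
      ≤ (X ^ Nat.card K - X : E[X]).roots.toFinset.card := by
        simpa using Set.ncard_le_ncard hroots
    _ ≤ (X ^ Nat.card K - X : E[X]).natDegree :=
        (Multiset.toFinset_card_le _).trans (card_roots' _)
    _ = (K : Set E).ncard := FiniteField.X_pow_card_sub_X_natDegree_eq E hc

theorem Subfield.eq_of_natCard_eq_s17 {E : Type*} [Field E] {K K' : Subfield E} [Finite K]
    [Finite K'] (h : Nat.card K = Nat.card K') : K = K' :=
  SetLike.coe_injective <| by
    rw [coe_eq_setOf_pow_natCard_eq_self, coe_eq_setOf_pow_natCard_eq_self, h]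

theorem finrank_eq_div_of_natCard_eq_pow {K L : Type*} [Field K] [Field L] [Algebra K L]
    [Finite L] {q d n : ℕ} (hq : 1 < q) (hK : Nat.card K = q ^ d) (hL : Nat.card L = q ^ n) :
    finrank K L = n / d := by
  have : Finite K := Finite.of_injective _ (algebraMap K L).injective
  have := Module.finite_of_finite K (M := L)
  have hd : d ≠ 0 := by
    rintro rfl
    exact (Finite.one_lt_card (α := K)).ne' (by simpa using hK)
  have hn : n = d * finrank K L :=
    Nat.pow_right_injective hq <| show q ^ n = q ^ (d * finrank K L) by
      rw [← hL, Module.natCard_eq_pow_finrank (K := K), hK, pow_mul]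
  rw [hn, Nat.mul_div_cancel_left _ (Nat.pos_of_ne_zero hd)]

theorem Set.natCard_sub_sum_ncard_compl_le_ncard_biInter {α ι : Type*} [Finite α] (t : Finset ι)
    (s : ι → Set α) :
    (Nat.card α : ℝ) - ∑ i ∈ t, (Nat.card α - (s i).ncard : ℝ) ≤
      (⋂ i ∈ t, s i).ncard := by
  have hcompl (u : Set α) : ((uᶜ).ncard : ℝ) = Nat.card α - u.ncard := by
    rw [← Set.ncard_add_ncard_compl u]
    push_cast
    ring
  have hunion : ((⋂ i ∈ t, s i)ᶜ.ncard : ℝ) ≤ ∑ i ∈ t, ((s i)ᶜ.ncard : ℝ) := by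
    rw [Set.compl_iInter₂]
    exact_mod_cast t.set_ncard_biUnion_le _
  simp only [hcompl] at hunion
  linarith

theorem natCard_isNormalElementOver {E : Type} [Field E] [Finite E] {q l n : ℕ} (hq : 1 < q)
    (hE : Nat.card E = q ^ n) (K : Subfield E) (hK : Nat.card K = q ^ l) :
    Nat.card {x : E // IsNormalElementOver q l n K x} = polyPhi ((X : K[X]) ^ (n / l) - 1) := by
  have := Fintype.ofFinite K
  have hcard : Fintype.card K = q ^ l := by rw [← Nat.card_eq_fintype_card, hK]
  unfold IsNormalElementOver
  rw [← hcard]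
  exact FiniteField.natCard_exists_basis_frobenius_pow K E
    (finrank_eq_div_of_natCard_eq_pow hq hK hE)

theorem isCompletelyNormal_iff {E : Type} [Field E] [Finite E] {q n : ℕ} (hn : n ≠ 0)
    (K : ℕ → Subfield E) (hK : ∀ d ∈ n.divisors, Nat.card (K d) = q ^ d) (x : E) :
    IsCompletelyNormal q n x ↔ ∀ d ∈ n.divisors, IsNormalElementOver q d n (K d) x := by
  refine ⟨fun h d hd => h d (Nat.dvd_of_mem_divisors hd) _ (hK d hd), fun h l hl K' hK' => ?_⟩
  have hl : l ∈ n.divisors := Nat.mem_divisors.mpr ⟨hl, hn⟩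
  rw [← Subfield.eq_of_natCard_eq_s17 ((hK l hl).trans hK'.symm)]
  exact h l hl

/-- The starting bound of Section 3:
`CN_q(n) ≥ q^n·(1 - Σ_{d ∣ n} (1 - φ_d(X^(n/d) - 1)/q^n))`, where for each divisor `d`
of `n`, `K d` is the intermediate field with `q^d` elements and `φ_d` is the polynomial
Euler function of `(K d)[X]`. -/
theorem cn_starting_bound (q n : ℕ) (hq : IsPrimePow q) (hn : 0 < n)
    (E : Type) [Field E] [Fintype E] (hE : Fintype.card E = q ^ n)
    (K : ℕ → Subfield E) (hK : ∀ d ∈ n.divisors, Nat.card (K d) = q ^ d) :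
    (CN q n E : ℝ) ≥ (q : ℝ) ^ n *
      (1 - ∑ d ∈ n.divisors,
        (1 - (polyPhi ((X : Polynomial (K d)) ^ (n / d) - 1) : ℝ) / (q : ℝ) ^ n)) := by
  have hE' : Nat.card E = q ^ n := by rw [Nat.card_eq_fintype_card, hE]
  have hnormal (d) (hd : d ∈ n.divisors) :
      {x : E | IsNormalElementOver q d n (K d) x}.ncard =
        polyPhi ((X : Polynomial (K d)) ^ (n / d) - 1) :=
    natCard_isNormalElementOver hq.one_lt hE' (K d) (hK d hd)
  have hCN :
      CN q n E = (⋂ d ∈ n.divisors, {x : E | IsNormalElementOver q d n (K d) x}).ncard := by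
    rw [CN, ← Nat.card_coe_set_eq]
    congr
    ext x
    simp [isCompletelyNormal_iff hn.ne' K hK]
  have hq0 : (q : ℝ) ^ n ≠ 0 := pow_ne_zero _ (Nat.cast_ne_zero.mpr hq.ne_zero)
  calc (q : ℝ) ^ n * (1 - ∑ d ∈ n.divisors,
        (1 - (polyPhi ((X : Polynomial (K d)) ^ (n / d) - 1) : ℝ) / (q : ℝ) ^ n))
      = (Nat.card E : ℝ) - ∑ d ∈ n.divisors,
          (Nat.card E - {x : E | IsNormalElementOver q d n (K d) x}.ncard : ℝ) := by
        rw [mul_sub, mul_one, Finset.mul_sum, hE']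
        push_cast
        congr 1
        refine Finset.sum_congr rfl fun d hd => ?_
        rw [hnormal d hd]
        field_simp
    _ ≤ CN q n E := hCN ▸ Set.natCard_sub_sum_ncard_compl_le_ncard_biInter _ _
end

section
/- Let F_q be the finite field of characteristic p with q elements, and let n = p^ℓ·m with ℓ ≥ 0 and gcd(m, p) = 1. Then for every j with 0 ≤ j ≤ ℓ and every divisor d of m, 1 − φ_{p^j d}((X^{m/d}−1)^{p^{ℓ−j}})/q^{p^ℓ m} ≤ m/(d·q^{p^j d}), where φ_{p^j d} is the polynomial Euler function computed in F_{q^{p^j d}}[X] and (X^{m/d}−1)^{p^{ℓ−j}} = X^{n/(p^j d)} − 1 in F_{q^{p^j d}}[X]. -/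
open Polynomial

/-!
A residue class modulo `f` that is not a unit shares a prime factor `P` with `f`, so the non-units
of `K[X] ⧸ (f)` are covered by the ideals `(P)`, `P` running over the normalized prime factors of
`f`. The ideal `(P)` has index `|K| ^ deg P ≥ |K|`, so there are at most
`ω(f) · |K| ^ (deg f - 1)` non-units. For `f = g ^ e` with `e ≠ 0`, `ω(f) = ω(g) ≤ deg g`.
-/

open UniqueFactorizationMonoid
open scoped Finset

theorem Ideal.Quotient.isUnit_mk_of_isCoprime {R : Type*} [CommRing R] {a b : R}
    (h : IsCoprime a b) : IsUnit (Ideal.Quotient.mk (Ideal.span {b}) a) :=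
  isCoprime_zero_right.mp <| by
    simpa [Ideal.Quotient.mk_singleton_self] using h.map (Ideal.Quotient.mk (Ideal.span {b}))

theorem Ideal.natCard_quotient_eq_mul_natCard_map {R : Type*} [CommRing R] {I J : Ideal R}
    (h : I ≤ J) :
    Nat.card (R ⧸ I) = Nat.card (R ⧸ J) * Nat.card (J.map (Ideal.Quotient.mk I)) := by
  rw [AddSubgroup.card_eq_card_quotient_mul_card_addSubgroup
    (J.map (Ideal.Quotient.mk I)).toAddSubgroup]
  congr 1
  exact Nat.card_congr (DoubleQuot.quotQuotEquivQuotOfLE h).toEquiv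

theorem setOf_not_isUnit_subset_biUnion_span_primeFactors {R : Type*} [CommRing R] [IsDomain R]
    [IsPrincipalIdealRing R] [NormalizationMonoid R] {f : R} (hf : f ≠ 0) :
    {x : R ⧸ Ideal.span {f} | ¬IsUnit x} ⊆
      ⋃ P ∈ primeFactors f, (Ideal.span {Ideal.Quotient.mk (Ideal.span {f}) P} : Set _) := by
  intro x hx
  obtain ⟨a, rfl⟩ := Ideal.Quotient.mk_surjective x
  obtain ⟨P, hP, hPa, hPf⟩ : ∃ P, Prime P ∧ P ∣ a ∧ P ∣ f := by
    by_contra! H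
    exact hx (Ideal.Quotient.isUnit_mk_of_isCoprime (isCoprime_of_prime_dvd (hf ·.2) H))
  obtain ⟨P', hP', hPP'⟩ := exists_mem_normalizedFactors_of_dvd hf hP.irreducible hPf
  refine Set.mem_biUnion (mem_primeFactors.mpr hP') ?_
  rw [SetLike.mem_coe, Ideal.mem_span_singleton]
  exact map_dvd _ (hPP'.symm.dvd.trans hPa)

namespace Polynomial

variable {K : Type*} [Field K]

theorem card_primeFactors_le_natDegree [DecidableEq K] (g : K[X]) :
    #(primeFactors g) ≤ g.natDegree := by
  rcases eq_or_ne g 0 with rfl | hg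
  · simp
  have hprime : ∀ P ∈ primeFactors g, Prime P := fun P hP =>
    prime_of_normalized_factor P (mem_primeFactors.mp hP)
  calc #(primeFactors g) = ∑ _P ∈ primeFactors g, 1 := (Finset.card_eq_sum_ones _)
    _ ≤ ∑ P ∈ primeFactors g, P.natDegree :=
      Finset.sum_le_sum fun P hP => (hprime P hP).irreducible.natDegree_pos
    _ = (radical g).natDegree := (natDegree_prod _ _ fun P hP => (hprime P hP).ne_zero).symm
    _ ≤ g.natDegree := natDegree_le_of_dvd radical_dvd_self hg

theorem natCard_quotient_span_singleton {f : K[X]} (hf : f ≠ 0) :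
    Nat.card (K[X] ⧸ Ideal.span {f}) = Nat.card K ^ f.natDegree := by
  have : Module.Finite K (K[X] ⧸ Ideal.span {f}) := (AdjoinRoot.powerBasis hf).finite
  rw [Module.natCard_eq_pow_finrank (K := K), finrank_quotient_span_eq_natDegree]

theorem natCard_span_mk_mul_pow_natDegree {f P : K[X]} (hf : f ≠ 0) (hP : P ∣ f) :
    Nat.card (Ideal.span {Ideal.Quotient.mk (Ideal.span {f}) P}) * Nat.card K ^ P.natDegree =
      Nat.card K ^ f.natDegree := by
  have h := Ideal.natCard_quotient_eq_mul_natCard_map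
    (Ideal.span_singleton_le_span_singleton.mpr hP)
  rw [Ideal.map_span, Set.image_singleton, natCard_quotient_span_singleton hf,
    natCard_quotient_span_singleton (ne_zero_of_dvd_ne_zero hf hP)] at h
  rw [h, mul_comm]

variable [Finite K]

theorem finite_quotient_span_singleton {f : K[X]} (hf : f ≠ 0) :
    Finite (K[X] ⧸ Ideal.span {f}) :=
  Nat.finite_of_card_ne_zero <| by
    rw [natCard_quotient_span_singleton hf]; exact pow_ne_zero _ Nat.card_pos.ne'

theorem ncard_setOf_not_isUnit_mul_le [DecidableEq K] {f : K[X]} (hf : f ≠ 0) :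
    {x : K[X] ⧸ Ideal.span {f} | ¬IsUnit x}.ncard * Nat.card K ≤
      #(primeFactors f) * Nat.card K ^ f.natDegree := by
  have := finite_quotient_span_singleton hf
  set I : K[X] → Set (K[X] ⧸ Ideal.span {f}) :=
    fun P => Ideal.span {Ideal.Quotient.mk (Ideal.span {f}) P}
  have hI (P) (hP : P ∈ primeFactors f) :
      (I P).ncard * Nat.card K ≤ Nat.card K ^ f.natDegree := by
    have hPf := dvd_of_mem_normalizedFactors (mem_primeFactors.mp hP)
    have hdeg := (prime_of_normalized_factor P (mem_primeFactors.mp hP)).irreducible.natDegree_pos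
    calc (I P).ncard * Nat.card K ≤ (I P).ncard * Nat.card K ^ P.natDegree := by
          gcongr; exact Nat.le_self_pow hdeg.ne' _
      _ = Nat.card K ^ f.natDegree := by
          rw [← natCard_span_mk_mul_pow_natDegree hf hPf, ← Nat.card_coe_set_eq]; rfl
  calc {x : K[X] ⧸ Ideal.span {f} | ¬IsUnit x}.ncard * Nat.card K
      ≤ (⋃ P : primeFactors f, I P).ncard * Nat.card K := by
        gcongr
        · exact Set.toFinite _
        · exact (setOf_not_isUnit_subset_biUnion_span_primeFactors hf).trans_eq
            (by ext; simp [I])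
    _ ≤ (∑ P : primeFactors f, (I P).ncard) * Nat.card K := by
        gcongr; exact Set.ncard_iUnion_le_of_fintype _
    _ ≤ #(primeFactors f) * Nat.card K ^ f.natDegree := by
        rw [Finset.sum_mul]
        calc ∑ P : primeFactors f, (I P).ncard * Nat.card K
            ≤ ∑ _P : primeFactors f, Nat.card K ^ f.natDegree :=
              Finset.sum_le_sum fun P _ => hI P P.2
          _ = _ := by simp

end Polynomial

section PolyPhi

variable {K : Type} [Field K] [Finite K]

theorem polyPhi_add_ncard_setOf_not_isUnit {f : K[X]} (hf : f ≠ 0) :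
    polyPhi f + {x : K[X] ⧸ Ideal.span {f} | ¬IsUnit x}.ncard = Nat.card K ^ f.natDegree := by
  have := finite_quotient_span_singleton hf
  rw [← natCard_quotient_span_singleton hf, polyPhi,
    ← Set.ncard_range_of_injective Units.val_injective]
  exact Set.ncard_add_ncard_compl _

theorem one_sub_polyPhi_div_le [DecidableEq K] {f : K[X]} (hf : f ≠ 0) :
    1 - (polyPhi f : ℝ) / (Nat.card K : ℝ) ^ f.natDegree ≤
      #(primeFactors f) / (Nat.card K : ℝ) := by
  have hQ : (0 : ℝ) < Nat.card K := by exact_mod_cast Nat.card_pos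
  have hcount := polyPhi_add_ncard_setOf_not_isUnit hf
  have hbound := ncard_setOf_not_isUnit_mul_le hf
  calc 1 - (polyPhi f : ℝ) / (Nat.card K : ℝ) ^ f.natDegree
      = ({x : K[X] ⧸ Ideal.span {f} | ¬IsUnit x}.ncard : ℝ) /
          (Nat.card K : ℝ) ^ f.natDegree := by
        rw [eq_div_iff (by positivity), sub_mul, div_mul_cancel₀ _ (by positivity)]
        rw [← Nat.cast_pow, ← hcount]; push_cast; ring
    _ ≤ #(primeFactors f) / (Nat.card K : ℝ) := by
        rw [div_le_div_iff₀ (by positivity) hQ]; exact_mod_cast hbound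

end PolyPhi

theorem one_sub_phi_ratio_le_general (p q ℓ m j d : ℕ) (hp : p.Prime)
    (hcop : Nat.gcd m p = 1)
    (hj : j ≤ ℓ) (hd : d ∣ m)
    (K : Type) [Field K] [Fintype K] (hK : Fintype.card K = q ^ (p ^ j * d)) :
    1 - (polyPhi (((X : K[X]) ^ (m / d) - 1) ^ p ^ (ℓ - j)) : ℝ) / (q : ℝ) ^ (p ^ ℓ * m) ≤
      (m : ℝ) / ((d : ℝ) * (q : ℝ) ^ (p ^ j * d)) := by
  classical
  have hm : m ≠ 0 := by rintro rfl; exact hp.ne_one (by simpa using hcop)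
  have hd0 : d ≠ 0 := ne_zero_of_dvd_ne_zero hm hd
  set g : K[X] := X ^ (m / d) - 1
  have hg : g ≠ 0 :=
    X_pow_sub_C_ne_zero (Nat.div_pos (Nat.le_of_dvd (Nat.pos_of_ne_zero hm) hd) hd0.bot_lt) 1
  have hgdeg : g.natDegree = m / d := natDegree_X_pow_sub_C
  have he : p ^ (ℓ - j) ≠ 0 := pow_ne_zero _ hp.ne_zero
  have hQ : (Nat.card K : ℝ) = (q : ℝ) ^ (p ^ j * d) := by
    rw [Nat.card_eq_fintype_card, hK, Nat.cast_pow]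
  have hexp : p ^ ℓ * m = p ^ j * d * (g ^ p ^ (ℓ - j)).natDegree := by
    rw [natDegree_pow, hgdeg]
    conv_lhs => rw [← Nat.add_sub_cancel' hj, pow_add, ← Nat.mul_div_cancel' hd]
    ring
  calc _ = 1 - (polyPhi (g ^ p ^ (ℓ - j)) : ℝ) /
        (Nat.card K : ℝ) ^ (g ^ p ^ (ℓ - j)).natDegree := by
        rw [hQ, ← pow_mul, ← hexp]
    _ ≤ #(primeFactors (g ^ p ^ (ℓ - j))) / (Nat.card K : ℝ) :=
        one_sub_polyPhi_div_le (pow_ne_zero _ hg)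
    _ ≤ (m / d : ℕ) / (Nat.card K : ℝ) := by
        rw [primeFactors_pow _ he, ← hgdeg]
        gcongr
        exact_mod_cast card_primeFactors_le_natDegree g
    _ = _ := by
        rw [hQ, Nat.cast_div hd (by exact_mod_cast hd0), div_div]

/-- Equation (3) of Section 3: for `q` a power of the prime `p`, `n = p^ℓ·m` with
`gcd(m,p) = 1`, any `0 ≤ j ≤ ℓ` and any divisor `d` of `m`, working in `K[X]` where
`K = F_{q^(p^j d)}`,
`1 - φ_{p^j d}((X^(m/d) - 1)^(p^(ℓ-j)))/q^(p^ℓ m) ≤ m/(d·q^(p^j d))`. -/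
theorem one_sub_phi_ratio_le (p q ℓ m j d : ℕ) (hp : p.Prime)
    (hq : ∃ k : ℕ, 0 < k ∧ q = p ^ k) (hcop : Nat.gcd m p = 1)
    (hj : j ≤ ℓ) (hd : d ∣ m)
    (K : Type) [Field K] [Fintype K] (hK : Fintype.card K = q ^ (p ^ j * d)) :
    1 - (polyPhi (((X : K[X]) ^ (m / d) - 1) ^ p ^ (ℓ - j)) : ℝ) / (q : ℝ) ^ (p ^ ℓ * m) ≤
      (m : ℝ) / ((d : ℝ) * (q : ℝ) ^ (p ^ j * d)) :=
  one_sub_phi_ratio_le_general p q ℓ m j d hp hcop hj hd K hK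
end
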